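/- arXiv:1701.08409 — 10 statements merged into one kernel-verified Lean document; each statement's English description precedes it below -/
import Mathlib

section
/- Let 1 ≤ k₁ < ⋯ < k_s be integers, let r = ⌊log₂(k_s)⌋ + 1, and define a_n = Σ_{l=0}^{n} (-1)^{C(l,k₁)+⋯+C(l,k_s)} C(n,l). Then lim_{n→∞} a_n / 2ⁿ = c₀(k₁,…,k_s), where c₀(k₁,…,k_s) = (1/2^r) Σ_{l=0}^{2^r−1} (-1)^{C(l,k₁)+⋯+C(l,k_s)}. -/
/-!
Since every `kᵢ < 2 ^ r`, Lucas's theorem makes `l ↦ (-1) ^ (C(l,k₁) + ⋯ + C(l,kₛ))` periodic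
with period `2 ^ r`. Expanding an `N`-periodic `f` in the characters `l ↦ ζ ^ (j * l)` of `ZMod N`
(`ζ = exp (2πi / N)`) turns `∑ₗ C(n,l) f(l)` into `N⁻¹ ∑ⱼ f̂(j) (1 + ζ ^ j) ^ n`; after division
by `2 ^ n` every term with `ζ ^ j ≠ 1` tends to `0` because `‖1 + ζ ^ j‖ < 2`, leaving `f̂(0) / N`,
the mean of `f`.
-/

open Finset Filter ZMod

theorem Nat.choose_add_prime_pow_modEq {p a k : ℕ} [hp : Fact p.Prime] (hk : k < p ^ a) (n : ℕ) :
    (n + p ^ a).choose k ≡ n.choose k [MOD p] := by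
  rw [← Int.natCast_modEq_iff]
  have hlucas (m : ℕ) :
      m.choose k ≡ ∏ i ∈ range a, (m / p ^ i % p).choose (k / p ^ i % p) [ZMOD p] := by
    simpa [Nat.div_eq_of_lt hk] using
      Choose.choose_modEq_choose_mul_prod_range_choose (n := m) (k := k) (p := p) a
  have hdigit : ∀ i ∈ range a, (n + p ^ a) / p ^ i % p = n / p ^ i % p := by
    intro i hi
    obtain ⟨j, rfl⟩ := Nat.exists_eq_add_of_lt (mem_range.mp hi)
    rw [show p ^ (i + j + 1) = p ^ i * (p ^ j * p) by ring,
      Nat.add_mul_div_left _ _ (pow_pos hp.out.pos i), Nat.add_mul_mod_self_right]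
  refine (hlucas _).trans ?_
  rw [prod_congr rfl fun i hi => by rw [hdigit i hi]]
  exact (hlucas n).symm

theorem periodic_neg_one_pow_sum_choose {R ι : Type*} [Ring R]
    (s : Finset ι) {k : ι → ℕ} {a : ℕ} (hk : ∀ i ∈ s, k i < 2 ^ a) :
    Function.Periodic (fun l : ℕ => (-1 : R) ^ ∑ i ∈ s, l.choose (k i)) (2 ^ a) := by
  have : Fact (Nat.Prime 2) := ⟨Nat.prime_two⟩
  intro l
  have hmod : ∑ i ∈ s, (l + 2 ^ a).choose (k i) ≡ ∑ i ∈ s, l.choose (k i) [MOD 2] :=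
    Nat.ModEq.sum fun i hi => Nat.choose_add_prime_pow_modEq (hk i hi) l
  dsimp only
  rw [neg_one_pow_eq_pow_mod_two, hmod, ← neg_one_pow_eq_pow_mod_two]

theorem Complex.norm_one_add_lt_two {z : ℂ} (hz : ‖z‖ = 1) (h1 : z ≠ 1) : ‖1 + z‖ < 2 := by
  have hray : ¬SameRay ℝ 1 z := (not_sameRay_iff_of_norm_eq (by simp [hz])).mpr h1.symm
  simpa [hz, one_add_one_eq_two] using norm_add_lt_of_not_sameRay hray

section Fourier

variable {N : ℕ} [NeZero N]

theorem ZMod.sum_choose_mul_eq_sum_dft_mul (Φ : ZMod N → ℂ) (n : ℕ) :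
    ∑ l ∈ range (n + 1), (n.choose l : ℂ) * Φ l =
      (N : ℂ)⁻¹ * ∑ j, 𝓕 Φ j * (1 + stdAddChar j) ^ n := by
  have hinv (l : ℕ) : Φ l = (N : ℂ)⁻¹ * ∑ j, 𝓕 Φ j * stdAddChar j ^ l := by
    conv_lhs => rw [← LinearEquiv.symm_apply_apply 𝓕 Φ]
    simp only [invDFT_apply, smul_eq_mul, mul_comm _ (l : ZMod N), ← nsmul_eq_mul,
      AddChar.map_nsmul_eq_pow, mul_comm (𝓕 Φ _)]
  simp_rw [hinv, mul_sum, sum_comm (s := range (n + 1)), add_comm (1 : ℂ), add_pow, one_pow,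
    mul_one, mul_sum]
  exact sum_congr rfl fun j _ => sum_congr rfl fun l _ => by ring

theorem ZMod.tendsto_sum_choose_mul_div_two_pow (Φ : ZMod N → ℂ) :
    Tendsto (fun n => (∑ l ∈ range (n + 1), (n.choose l : ℂ) * Φ l) / 2 ^ n) atTop
      (nhds ((N : ℂ)⁻¹ * ∑ j, Φ j)) := by
  simp_rw [sum_choose_mul_eq_sum_dft_mul, mul_div_assoc, sum_div, mul_div_assoc, ← div_pow]
  rw [← dft_apply_zero, ← Fintype.sum_ite_eq' (0 : ZMod N) (𝓕 Φ)]
  refine (tendsto_finsetSum _ fun j _ => ?_).const_mul _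
  split_ifs with hj
  · subst hj
    simp
  · have hnorm : ‖(1 + stdAddChar j) / 2‖ < 1 := by
      rw [norm_div, Complex.norm_two, div_lt_one two_pos]
      refine Complex.norm_one_add_lt_two ?_ ?_
      · exact Circle.norm_coe _
      · rwa [← AddChar.map_zero_eq_one (stdAddChar (N := N)), injective_stdAddChar.ne_iff]
    simpa using (tendsto_pow_atTop_nhds_zero_of_norm_lt_one hnorm).const_mul (𝓕 Φ j)

theorem Function.Periodic.tendsto_sum_choose_mul_div_two_pow {f : ℕ → ℂ}
    (hf : Function.Periodic f N) :
    Tendsto (fun n => (∑ l ∈ range (n + 1), (n.choose l : ℂ) * f l) / 2 ^ n) atTop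
      (nhds ((N : ℂ)⁻¹ * ∑ t ∈ range N, f t)) := by
  have hval (l : ℕ) : f (l : ZMod N).val = f l := by rw [ZMod.val_natCast, hf.map_mod_nat]
  have hsum : ∑ j : ZMod N, f j.val = ∑ t ∈ range N, f t :=
    sum_bij' (fun j _ => j.val) (fun t _ => t) (fun j _ => mem_range.mpr (ZMod.val_lt j))
      (fun _ _ => mem_univ _) (fun j _ => ZMod.natCast_zmod_val j)
      (fun t ht => ZMod.val_cast_of_lt (mem_range.mp ht)) (fun _ _ => rfl)
  have h := ZMod.tendsto_sum_choose_mul_div_two_pow (N := N) (fun j => f j.val)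
  simp only [hval, hsum] at h
  exact h

end Fourier

theorem binomial_sum_asymptotic_general
    (s : ℕ) (hs : 0 < s) (k : Fin s → ℕ)
    (hmono : StrictMono k)
    (r : ℕ) (hr : r = Nat.log 2 (k ⟨s - 1, Nat.sub_lt hs one_pos⟩) + 1)
    (a : ℕ → ℤ)
    (ha : ∀ n : ℕ, a n =
      ∑ l ∈ Finset.range (n + 1),
        (-1 : ℤ) ^ (∑ i : Fin s, Nat.choose l (k i)) * (n.choose l : ℤ))
    (c₀ : ℝ)
    (hc₀ : c₀ = (1 / 2 ^ r : ℝ) *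
      ∑ l ∈ Finset.range (2 ^ r), (-1 : ℝ) ^ (∑ i : Fin s, Nat.choose l (k i))) :
    Filter.Tendsto (fun n : ℕ => (a n : ℝ) / 2 ^ n) Filter.atTop (nhds c₀) := by
  have hk : ∀ i ∈ univ, k i < 2 ^ r := fun i _ => hr ▸
    (hmono.monotone (Fin.mk_le_mk.mpr (Nat.le_sub_one_of_lt i.isLt))).trans_lt
      (Nat.lt_pow_succ_log_self one_lt_two _)
  have hlim :=
    (periodic_neg_one_pow_sum_choose (R := ℂ) univ hk).tendsto_sum_choose_mul_div_two_pow
  rw [← tendsto_ofReal_iff]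
  convert hlim using 2 with n
  · simp [ha, mul_comm]
  · simp [hc₀]

/-- For integers `1 ≤ k₁ < ⋯ < k_s`, with `r = ⌊log₂ k_s⌋ + 1`, the sequence
`a_n = Σ_{l=0}^n (-1)^(C(l,k₁)+⋯+C(l,k_s)) C(n,l)` satisfies
`lim_{n→∞} a_n / 2^n = c₀(k₁,…,k_s) = (1/2^r) Σ_{l=0}^{2^r−1} (-1)^(C(l,k₁)+⋯+C(l,k_s))`. -/
theorem binomial_sum_asymptotic
    (s : ℕ) (hs : 0 < s) (k : Fin s → ℕ)
    (hk1 : 1 ≤ k ⟨0, hs⟩) (hmono : StrictMono k)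
    (r : ℕ) (hr : r = Nat.log 2 (k ⟨s - 1, Nat.sub_lt hs one_pos⟩) + 1)
    (a : ℕ → ℤ)
    (ha : ∀ n : ℕ, a n =
      ∑ l ∈ Finset.range (n + 1),
        (-1 : ℤ) ^ (∑ i : Fin s, Nat.choose l (k i)) * (n.choose l : ℤ))
    (c₀ : ℝ)
    (hc₀ : c₀ = (1 / 2 ^ r : ℝ) *
      ∑ l ∈ Finset.range (2 ^ r), (-1 : ℝ) ^ (∑ i : Fin s, Nat.choose l (k i))) :
    Filter.Tendsto (fun n : ℕ => (a n : ℝ) / 2 ^ n) Filter.atTop (nhds c₀) :=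
  binomial_sum_asymptotic_general s hs k hmono r hr a ha c₀ hc₀
end

section
/- Let j ≥ 1 and k ≥ 1 be integers, let F : 𝔽₂ʲ → 𝔽₂ be a Boolean function, and let n ≥ 1 be such that n + j ≥ k. Regard F as a Boolean function of the first j of n + j variables. Then S(σ_{n+j,k} + F) = Σ_{l=0}^{n} ( Σ_{m=0}^{j} C_m(F) · (-1)^{C(l+m,k)} ) · C(n,l), where C(a,b) denotes the binomial coefficient. -/
/-- Exponential sum of a Boolean function in `N` variables. -/
def expSum {N : ℕ} (G : (Fin N → ZMod 2) → ZMod 2) : ℤ :=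
  ∑ x : Fin N → ZMod 2, (-1 : ℤ) ^ (G x).val

/-- Elementary symmetric Boolean polynomial of degree `k` in `n` variables. -/
def sigma (n k : ℕ) (x : Fin n → ZMod 2) : ZMod 2 :=
  ∑ A ∈ Finset.powersetCard k (Finset.univ : Finset (Fin n)), ∏ i ∈ A, x i

/-- Hamming weight of a Boolean vector. -/
def wt {j : ℕ} (x : Fin j → ZMod 2) : ℕ :=
  (Finset.univ.filter (fun i => x i = 1)).card

/-- The weight-coefficients `C_m(F) = Σ_{wt(x)=m} (-1)^{F(x)}` of a Boolean function. -/
def coefC {j : ℕ} (F : (Fin j → ZMod 2) → ZMod 2) (m : ℕ) : ℤ :=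
  ∑ x ∈ Finset.univ.filter (fun x : Fin j → ZMod 2 => wt x = m), (-1 : ℤ) ^ (F x).val

/-!
Over `𝔽₂` a product `∏_{i ∈ A} x_i` is `1` exactly when `A` lies in the support of `x`, so
`σ_{N,k}(x) = C(wt x, k) mod 2`. Splitting `x = (y, z)` into its first `j` and last `n`
coordinates, the summand becomes `(-1)^{F(y)} (-1)^{C(wt y + wt z, k)}`. Grouping the `z` by weight
produces the factors `C(n, l)`, and grouping the `y` by weight produces the coefficients `C_m(F)`.
-/

open Finset

lemma neg_one_pow_val_add {R : Type*} [Ring R] (a b : ZMod 2) :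
    (-1 : R) ^ (a + b).val = (-1) ^ a.val * (-1) ^ b.val := by
  rw [ZMod.val_add, ← neg_one_pow_eq_pow_mod_two, pow_add]

lemma neg_one_pow_val_natCast {R : Type*} [Ring R] (c : ℕ) :
    (-1 : R) ^ (c : ZMod 2).val = (-1) ^ c := by
  rw [ZMod.val_natCast, ← neg_one_pow_eq_pow_mod_two]

def ones {n : ℕ} (x : Fin n → ZMod 2) : Finset (Fin n) :=
  univ.filter (x · = 1)

lemma apply_eq_ite_mem_ones {n : ℕ} (x : Fin n → ZMod 2) (i : Fin n) :
    x i = if i ∈ ones x then 1 else 0 := by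
  have : ∀ a : ZMod 2, a = if a = 1 then 1 else 0 := by decide
  simpa [ones] using this (x i)

def onesEquiv (n : ℕ) : (Fin n → ZMod 2) ≃ Finset (Fin n) where
  toFun := ones
  invFun s i := if i ∈ s then 1 else 0
  left_inv x := funext fun i => (apply_eq_ite_mem_ones x i).symm
  right_inv s := by ext i; simp [ones]

lemma sigma_eq_choose_wt (n k : ℕ) (x : Fin n → ZMod 2) :
    sigma n k x = ((wt x).choose k : ZMod 2) := by
  have hprod (A : Finset (Fin n)) : ∏ i ∈ A, x i = if A ⊆ ones x then 1 else 0 := by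
    rw [prod_congr rfl fun i _ => apply_eq_ite_mem_ones x i, prod_boole]
    rfl
  have hfilter : (powersetCard k univ).filter (· ⊆ ones x) = powersetCard k (ones x) := by
    ext A
    simp [mem_powersetCard, and_comm]
  rw [sigma, sum_congr rfl fun A _ => hprod A, sum_boole, hfilter, card_powersetCard]
  rfl

lemma sum_comp_wt {M : Type*} [AddCommMonoid M] (n : ℕ) (g : ℕ → M) :
    ∑ x : Fin n → ZMod 2, g (wt x) = ∑ l ∈ range (n + 1), n.choose l • g l := by
  calc ∑ x : Fin n → ZMod 2, g (wt x) = ∑ s : Finset (Fin n), g #s :=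
        (onesEquiv n).sum_comp fun s => g #s
    _ = ∑ l ∈ range (n + 1), n.choose l • g l := by
      rw [← powerset_univ, sum_powerset_apply_card, card_univ, Fintype.card_fin]

lemma wt_le {n : ℕ} (x : Fin n → ZMod 2) : wt x ≤ n :=
  (card_filter_le _ _).trans_eq (card_fin n)

lemma sum_wt_mul_neg_one_pow_eq_sum_coefC {j : ℕ} (F : (Fin j → ZMod 2) → ZMod 2) (H : ℕ → ℤ) :
    ∑ y : Fin j → ZMod 2, H (wt y) * (-1 : ℤ) ^ (F y).val =
      ∑ m ∈ range (j + 1), H m * coefC F m := by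
  rw [← sum_fiberwise_of_maps_to (g := wt) fun y _ => mem_range_succ_iff.mpr (wt_le y)]
  refine sum_congr rfl fun m _ => ?_
  rw [coefC, mul_sum]
  exact sum_congr rfl fun y hy => by rw [(mem_filter.mp hy).2]

lemma wt_comp_cast {m n : ℕ} (h : m = n) (x : Fin n → ZMod 2) : wt (x ∘ Fin.cast h) = wt x := by
  subst h
  rfl

lemma wt_append {m n : ℕ} (y : Fin m → ZMod 2) (z : Fin n → ZMod 2) :
    wt (Fin.append y z) = wt y + wt z := by
  simp only [wt, card_filter, Fin.sum_univ_add, Fin.append_left, Fin.append_right]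

lemma sum_eq_sum_sum_append_cast {α M : Type*} [Fintype α] [AddCommMonoid M] (n j : ℕ)
    (f : (Fin (n + j) → α) → M) :
    ∑ x, f x =
      ∑ y : Fin j → α, ∑ z : Fin n → α, f (Fin.append y z ∘ Fin.cast (Nat.add_comm n j)) := by
  let e := (Fin.appendEquiv j n).trans ((finCongr (Nat.add_comm j n)).arrowCongr (.refl α))
  rw [← e.sum_comp, Fintype.sum_prod_type]
  rfl

lemma append_cast_castLE {α : Type*} {n j : ℕ} (y : Fin j → α) (z : Fin n → α) (i : Fin j) :
    (Fin.append y z ∘ Fin.cast (Nat.add_comm n j)) (Fin.castLE (Nat.le_add_left j n) i) = y i :=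
  Fin.append_left y z i

theorem exponential_sum_perturbation_formula_general
    (j k : ℕ)
    (F : (Fin j → ZMod 2) → ZMod 2)
    (n : ℕ) :
    expSum (fun x : Fin (n + j) → ZMod 2 =>
        sigma (n + j) k x + F (fun i => x (Fin.castLE (Nat.le_add_left j n) i))) =
      ∑ l ∈ Finset.range (n + 1),
        (∑ m ∈ Finset.range (j + 1), coefC F m * (-1 : ℤ) ^ Nat.choose (l + m) k) *
          (n.choose l : ℤ) := by
  have hsplit : expSum (fun x : Fin (n + j) → ZMod 2 =>
        sigma (n + j) k x + F (fun i => x (Fin.castLE (Nat.le_add_left j n) i))) =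
      ∑ y : Fin j → ZMod 2, (∑ l ∈ range (n + 1), (n.choose l : ℤ) * (-1) ^ (wt y + l).choose k) *
        (-1) ^ (F y).val := by
    rw [expSum, sum_eq_sum_sum_append_cast]
    refine sum_congr rfl fun y _ => ?_
    simp_rw [← nsmul_eq_mul, ← sum_comp_wt, sum_mul]
    refine sum_congr rfl fun z _ => ?_
    rw [sigma_eq_choose_wt, wt_comp_cast, wt_append, neg_one_pow_val_add, neg_one_pow_val_natCast]
    simp only [append_cast_castLE]
  rw [hsplit, sum_wt_mul_neg_one_pow_eq_sum_coefC F fun m =>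
    ∑ l ∈ range (n + 1), (n.choose l : ℤ) * (-1) ^ (m + l).choose k]
  simp only [sum_mul]
  rw [sum_comm]
  refine sum_congr rfl fun l _ => sum_congr rfl fun m _ => ?_
  rw [Nat.add_comm m l]
  ring

/-- `S(σ_{n+j,k} + F) = Σ_{l=0}^n (Σ_{m=0}^j C_m(F)(-1)^{C(l+m,k)}) C(n,l)`, where `F`
is a Boolean function of the first `j` of the `n + j` variables. -/
theorem exponential_sum_perturbation_formula
    (j k : ℕ) (hj : 1 ≤ j) (hk : 1 ≤ k)
    (F : (Fin j → ZMod 2) → ZMod 2)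
    (n : ℕ) (hn : 1 ≤ n) (hnk : k ≤ n + j) :
    expSum (fun x : Fin (n + j) → ZMod 2 =>
        sigma (n + j) k x + F (fun i => x (Fin.castLE (Nat.le_add_left j n) i))) =
      ∑ l ∈ Finset.range (n + 1),
        (∑ m ∈ Finset.range (j + 1), coefC F m * (-1 : ℤ) ^ Nat.choose (l + m) k) *
          (n.choose l : ℤ) :=
  exponential_sum_perturbation_formula_general j k F n
end

section
/- Let k > 1 and m ≥ 1 be fixed integers with m ≤ k, let k̄ = 2⌊k/2⌋ + 1 with 2-adic expansion k̄ = 1 + 2^{a₁} + ⋯ + 2^{a_s} (0 < a₁ < ⋯ < a_s), let ε(k) = 0 if k is a power of 2 and 1 otherwise, and let p_k(X) = (X−2)^{ε(k)} Π_{l=1}^{s} Φ_{2^{a_l+1}}(X−1), of degree d = 2⌊k/2⌋ + ε(k). Then the sequence b_n = Σ_{l=0}^{n} (-1)^{C(l+m,k)} C(n,l), which equals the exponential sum S( Σ_{j=0}^{m} C(m,j)·σ_{n,k−j} ) for n ≥ k, satisfies the homogeneous linear recurrence whose characteristic polynomial is p_k: writing p_k(X) = X^d − c_{d−1}X^{d−1}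 − ⋯ − c₀, one has b_{n+d} = c_{d−1}b_{n+d−1} + ⋯ + c₀b_n for all n ≥ 1. -/
/-!
Since `σ_{n,j}(x) ≡ C(|x|, j) (mod 2)` for the weight `|x|` of `x`, Vandermonde's identity turns
the Boolean function into `C(|x| + m, k) mod 2`, and grouping the `x` by weight gives `b_n`.

Write `b_n = Σ_l C(n,l) A_l` with `A_l = (-1)^C(l+m,k)`, i.e. `b_n = ((1 + E)^n A)_0` for the shift
operator `E`. Then `Σ_j p_j b_{n+j}` is the binomial transform of `p(1 + E) A`, and
`p(X + 1) = (X - 1)^ε Π_i (X^(2^a_i) + 1) = (X - 1)^ε Σ_T X^(Σ_{i ∈ T} 2^a_i)`.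
By Lucas' theorem, for `K = Σ_i 2^a_i` and any `x` exactly one of the numbers
`C(x + Σ_{i ∈ T} 2^a_i, K)` is odd, so `Σ_T A_{l + Σ_{i ∈ T} 2^a_i}` is constant in `l` when `k`
is even, and `2^s - 1 + (-1)^(l+m)` when `k` is odd. Hence `p(1 + E) A` is a multiple of
`(-1)^l` (zero when `k` is a power of two, as then `s = 1`), and the binomial transform of
`(-1)^l` vanishes for `n ≥ 1`.
-/

open Finset Polynomial

section Lucas

theorem Nat.odd_choose_two_mul_iff (n k : ℕ) :
    Odd (n.choose (2 * k)) ↔ Odd ((n / 2).choose k) := by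
  have h := Choose.choose_modEq_choose_mod_mul_choose_div_nat (p := 2) (n := n) (k := 2 * k)
  rw [Nat.mul_mod_right, Nat.choose_zero_right, one_mul,
    Nat.mul_div_cancel_left k two_pos] at h
  rw [Nat.odd_iff, Nat.odd_iff, h]

theorem Nat.odd_choose_two_mul_add_one_iff (n k : ℕ) :
    Odd (n.choose (2 * k + 1)) ↔ Odd n ∧ Odd ((n / 2).choose k) := by
  have h := Choose.choose_modEq_choose_mod_mul_choose_div_nat (p := 2) (n := n) (k := 2 * k + 1)
  rw [Nat.mul_add_mod, Nat.mul_add_div two_pos, Nat.one_mod, Nat.choose_one_right,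
    show 1 / 2 = 0 from rfl, add_zero] at h
  rw [Nat.odd_iff, Nat.odd_iff, Nat.odd_iff, h]
  rcases Nat.mod_two_eq_zero_or_one n with hn | hn <;> simp [hn]

theorem Nat.odd_choose_two_pow_add_iff {n K : ℕ} (M : ℕ) (hK : 2 ^ (M + 1) ∣ K) :
    Odd (n.choose (2 ^ M + K)) ↔ Odd (n / 2 ^ M) ∧ Odd (n.choose K) := by
  induction M generalizing n K with
  | zero =>
    obtain ⟨j, rfl⟩ := hK
    rw [zero_add, pow_one, pow_zero, Nat.div_one, add_comm, Nat.odd_choose_two_mul_add_one_iff,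
      Nat.odd_choose_two_mul_iff]
  | succ M ih =>
    obtain ⟨j, rfl⟩ := hK
    rw [show 2 ^ (M + 1) + 2 ^ (M + 1 + 1) * j = 2 * (2 ^ M + 2 ^ (M + 1) * j) by ring,
      show 2 ^ (M + 1 + 1) * j = 2 * (2 ^ (M + 1) * j) by ring,
      Nat.odd_choose_two_mul_iff, Nat.odd_choose_two_mul_iff, ih (dvd_mul_right _ _),
      Nat.div_div_eq_div_mul, ← pow_succ']

theorem Nat.odd_add_div_two_pow_iff (x : ℕ) {S M : ℕ} (hS : 2 ^ (M + 1) ∣ S) :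
    Odd ((x + S) / 2 ^ M) ↔ Odd (x / 2 ^ M) := by
  obtain ⟨j, rfl⟩ := hS
  rw [pow_succ, mul_assoc, Nat.add_mul_div_left _ _ (by positivity)]
  simp [Nat.odd_add]

end Lucas

section SumsOfDistinctPowersOfTwo

variable {ι : Type*} {w : ι → ℕ} {E : Finset ι}

theorem card_eq_one_of_sum_two_pow_eq_two_pow (hw : Set.InjOn w E) {t : ℕ}
    (h : ∑ i ∈ E, 2 ^ w i = 2 ^ t) : #E = 1 := by
  rw [← sum_image (f := (2 ^ ·)) hw, ← sum_singleton (2 ^ ·) t] at h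
  rw [← card_image_of_injOn hw, geomSum_injective le_rfl h, card_singleton]

variable [DecidableEq ι]

theorem card_filter_odd_choose_add_sum_two_pow (hw : Set.InjOn w E) (x : ℕ) :
    #{T ∈ E.powerset | Odd ((x + ∑ i ∈ T, 2 ^ w i).choose (∑ i ∈ E, 2 ^ w i))} = 1 := by
  induction E using Finset.induction_on_min_value w generalizing x with
  | empty => simp
  | insert a E haE hmin ih =>
    have hlt : ∀ i ∈ E, w a < w i := fun i hi =>
      (hmin i hi).lt_of_ne fun h => haE (hw (mem_insert_self a E) (mem_insert_of_mem hi) h ▸ hi)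
    have hdvd : ∀ T ⊆ E, 2 ^ (w a + 1) ∣ ∑ i ∈ T, 2 ^ w i := fun T hT =>
      dvd_sum fun i hi => pow_dvd_pow 2 (hlt i (hT hi))
    have hwithout : ∀ T ∈ E.powerset,
        Odd ((x + ∑ i ∈ T, 2 ^ w i).choose (2 ^ w a + ∑ i ∈ E, 2 ^ w i)) ↔
          Odd (x / 2 ^ w a) ∧ Odd ((x + ∑ i ∈ T, 2 ^ w i).choose (∑ i ∈ E, 2 ^ w i)) := by
      intro T hT
      rw [Nat.odd_choose_two_pow_add_iff _ (hdvd E subset_rfl),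
        Nat.odd_add_div_two_pow_iff x (hdvd T (mem_powerset.1 hT))]
    -- adding `2 ^ w a` flips the bit of `x` in position `w a`
    have hwith : ∀ T ∈ E.powerset,
        Odd ((x + ∑ i ∈ insert a T, 2 ^ w i).choose (2 ^ w a + ∑ i ∈ E, 2 ^ w i)) ↔
          ¬Odd (x / 2 ^ w a) ∧
            Odd ((x + 2 ^ w a + ∑ i ∈ T, 2 ^ w i).choose (∑ i ∈ E, 2 ^ w i)) := by
      intro T hT
      rw [sum_insert fun h => haE (mem_powerset.1 hT h), ← add_assoc,
        Nat.odd_choose_two_pow_add_iff _ (hdvd E subset_rfl),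
        Nat.odd_add_div_two_pow_iff _ (hdvd T (mem_powerset.1 hT)),
        Nat.add_div_right _ (by positivity), Nat.odd_add_one]
    rw [card_filter, sum_powerset_insert haE, sum_insert haE,
      sum_congr rfl fun T hT => if_congr (hwithout T hT) rfl rfl,
      sum_congr rfl fun T hT => if_congr (hwith T hT) rfl rfl]
    by_cases h : Odd (x / 2 ^ w a) <;>
      simp only [h, true_and, false_and, not_true, not_false_eq_true, if_false, sum_const_zero,
        add_zero, zero_add, ← card_filter, ih (hw.mono (subset_insert a E))]

theorem sum_neg_one_pow_eq_card_sub_two_mul_card_filter_odd {α : Type*} (S : Finset α)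
    (f : α → ℕ) : ∑ a ∈ S, (-1 : ℤ) ^ f a = #S - 2 * #{a ∈ S | Odd (f a)} := by
  rw [card_filter, card_eq_sum_ones, Nat.cast_sum, Nat.cast_sum, mul_sum, ← sum_sub_distrib]
  refine sum_congr rfl fun a _ => ?_
  rcases Nat.even_or_odd (f a) with h | h
  · simp [h.neg_one_pow, Nat.not_odd_iff_even.2 h]
  · simp [h.neg_one_pow, h]

theorem sum_powerset_neg_one_pow_choose_sum_two_pow (hw : Set.InjOn w E) (x : ℕ) :
    ∑ T ∈ E.powerset, (-1 : ℤ) ^ (x + ∑ i ∈ T, 2 ^ w i).choose (∑ i ∈ E, 2 ^ w i) =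
      2 ^ #E - 2 := by
  rw [sum_neg_one_pow_eq_card_sub_two_mul_card_filter_odd,
    card_filter_odd_choose_add_sum_two_pow hw, card_powerset]
  push_cast
  ring

theorem sum_powerset_neg_one_pow_choose_sum_two_pow_add_one (hw : Set.InjOn w E)
    (hw0 : ∀ i ∈ E, 0 < w i) (x : ℕ) :
    ∑ T ∈ E.powerset, (-1 : ℤ) ^ (x + ∑ i ∈ T, 2 ^ w i).choose (∑ i ∈ E, 2 ^ w i + 1) =
      2 ^ #E - 1 + (-1) ^ x := by
  have hdvd : ∀ T ⊆ E, 2 ^ (0 + 1) ∣ ∑ i ∈ T, 2 ^ w i := fun T hT =>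
    dvd_sum fun i hi => dvd_pow_self 2 (hw0 i (hT hi)).ne'
  have hodd : ∀ T ∈ E.powerset, Odd ((x + ∑ i ∈ T, 2 ^ w i).choose (∑ i ∈ E, 2 ^ w i + 1)) ↔
      Odd x ∧ Odd ((x + ∑ i ∈ T, 2 ^ w i).choose (∑ i ∈ E, 2 ^ w i)) := by
    intro T hT
    rw [add_comm _ 1, ← pow_zero 2, Nat.odd_choose_two_pow_add_iff 0 (hdvd E subset_rfl),
      Nat.odd_add_div_two_pow_iff x (hdvd T (mem_powerset.1 hT)), pow_zero, Nat.div_one]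
  rw [sum_neg_one_pow_eq_card_sub_two_mul_card_filter_odd, filter_congr hodd, card_powerset]
  rcases Nat.even_or_odd x with h | h
  · simp [h.neg_one_pow, Nat.not_odd_iff_even.2 h]
  · simp only [h, true_and, card_filter_odd_choose_add_sum_two_pow hw, h.neg_one_pow]
    push_cast
    ring

end SumsOfDistinctPowersOfTwo

section BinomialTransform

variable {R : Type*} [CommRing R]

def shift : Module.End R (ℕ → R) := LinearMap.funLeft R R (· + 1)

theorem shift_pow_apply (j : ℕ) (A : ℕ → R) (l : ℕ) : (shift ^ j) A l = A (l + j) := by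
  induction j generalizing A with
  | zero => rfl
  | succ j ih => rw [pow_succ, Module.End.mul_apply, ih]; rfl

theorem shift_sub_one_apply (A : ℕ → R) (l : ℕ) :
    (shift - 1 : Module.End R (ℕ → R)) A l = A (l + 1) - A l := rfl

def binomialTransform (A : ℕ → R) (n : ℕ) : R := ∑ l ∈ range (n + 1), A l * n.choose l

theorem binomialTransform_eq_one_add_shift_pow_apply (A : ℕ → R) (n : ℕ) :
    binomialTransform A n = ((1 + shift) ^ n) A 0 := by
  rw [add_comm, (Commute.one_right shift).add_pow, binomialTransform, LinearMap.coe_sum,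
    Finset.sum_apply, Finset.sum_apply]
  refine sum_congr rfl fun l _ => ?_
  rw [one_pow, mul_one, Module.End.mul_apply, Module.End.natCast_apply, shift_pow_apply,
    Pi.smul_apply, zero_add, nsmul_eq_mul']

theorem sum_coeff_mul_binomialTransform_add (q : R[X]) {D : ℕ} (hq : q.natDegree < D)
    (A : ℕ → R) (n : ℕ) :
    ∑ j ∈ range D, q.coeff j * binomialTransform A (n + j) =
      binomialTransform (aeval (1 + shift) q A) n := by
  rw [binomialTransform_eq_one_add_shift_pow_apply, aeval_eq_sum_range' hq,
    ← Module.End.mul_apply, mul_sum, LinearMap.coe_sum, Finset.sum_apply, Finset.sum_apply]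
  refine sum_congr rfl fun j _ => ?_
  rw [binomialTransform_eq_one_add_shift_pow_apply, mul_smul_comm, ← pow_add,
    LinearMap.smul_apply, Pi.smul_apply, smul_eq_mul]

theorem binomialTransform_add_natDegree_of_monic {q : R[X]} (hq : q.Monic) {A : ℕ → R} {n : ℕ}
    (h : binomialTransform (aeval (1 + shift) q A) n = 0) :
    binomialTransform A (n + q.natDegree) =
      ∑ i ∈ range q.natDegree, -q.coeff i * binomialTransform A (n + i) := by
  have := sum_coeff_mul_binomialTransform_add q (lt_add_one _) A n
  rw [h, sum_range_succ, hq.coeff_natDegree, one_mul] at this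
  simp only [neg_mul, sum_neg_distrib]
  linear_combination this

theorem binomialTransform_neg_one_pow_mul (c : R) {n : ℕ} (hn : n ≠ 0) :
    binomialTransform (fun l => (-1) ^ l * c) n = 0 := by
  have h : ∑ l ∈ range (n + 1), (-1 : R) ^ l * 1 ^ (n - l) * n.choose l = 0 := by
    rw [← add_pow, neg_add_cancel, zero_pow hn]
  rw [binomialTransform, ← mul_zero c, ← h, mul_sum]
  exact sum_congr rfl fun l _ => by ring

end BinomialTransform

section CharacteristicPolynomial

variable {R : Type*} [CommRing R] {ι : Type*}

theorem cyclotomic_two_pow_succ (a : ℕ) : cyclotomic (2 ^ (a + 1)) R = X ^ 2 ^ a + 1 := by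
  rw [cyclotomic_prime_pow_eq_geom_sum Nat.prime_two, sum_range_succ, sum_range_one, pow_zero,
    pow_one, add_comm]

theorem X_sub_C_two_pow_mul_prod_cyclotomic_comp (ε : ℕ) (w : ι → ℕ) (E : Finset ι) :
    (X - C 2) ^ ε * ∏ i ∈ E, (cyclotomic (2 ^ (w i + 1)) R).comp (X - 1) =
      ((X - 1) ^ ε * ∏ i ∈ E, (X ^ 2 ^ w i + 1) : R[X]).comp (X - 1) := by
  simp only [mul_comp, pow_comp, sub_comp, X_comp, one_comp, Polynomial.prod_comp,
    cyclotomic_two_pow_succ, add_comp]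
  rw [sub_sub, one_add_one_eq_two, C_ofNat]

theorem monic_X_sub_one_pow_mul_prod_X_pow_add_one (ε : ℕ) {w : ι → ℕ} {E : Finset ι}
    (hw : ∀ i ∈ E, w i ≠ 0) : ((X - 1) ^ ε * ∏ i ∈ E, (X ^ w i + 1) : R[X]).Monic :=
  ((monic_X_sub_C 1).pow ε).mul (monic_prod_of_monic _ _ fun i hi => monic_X_pow_add_C 1 (hw i hi))

theorem natDegree_X_sub_one_pow_mul_prod_X_pow_add_one [Nontrivial R] (ε : ℕ) {w : ι → ℕ}
    {E : Finset ι} (hw : ∀ i ∈ E, w i ≠ 0) :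
    ((X - 1) ^ ε * ∏ i ∈ E, (X ^ w i + 1) : R[X]).natDegree = ε + ∑ i ∈ E, w i := by
  have hmonic : ∀ i ∈ E, (X ^ w i + C 1 : R[X]).Monic := fun i hi => monic_X_pow_add_C 1 (hw i hi)
  rw [← C_1, ((monic_X_sub_C 1).pow ε).natDegree_mul (monic_prod_of_monic _ _ hmonic),
    (monic_X_sub_C 1).natDegree_pow, natDegree_prod_of_monic _ _ hmonic, natDegree_X_sub_C,
    mul_one]
  exact congrArg _ (sum_congr rfl fun i _ => natDegree_X_pow_add_C)

theorem Polynomial.Monic.comp_X_sub_one {q : R[X]} (hq : q.Monic) : (q.comp (X - 1)).Monic := by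
  simpa using hq.comp_X_sub_C 1

theorem natDegree_comp_X_sub_one [IsDomain R] (q : R[X]) :
    (q.comp (X - 1)).natDegree = q.natDegree := by
  rw [natDegree_comp, ← C_1, natDegree_X_sub_C, mul_one]

theorem prod_X_pow_add_one [DecidableEq ι] (w : ι → ℕ) (E : Finset ι) :
    ∏ i ∈ E, (X ^ w i + 1 : R[X]) = ∑ T ∈ E.powerset, X ^ ∑ i ∈ T, w i := by
  rw [prod_add]
  exact sum_congr rfl fun T _ => by rw [prod_const_one, mul_one, prod_pow_eq_pow_sum]

theorem aeval_one_add_shift_comp_X_sub_one [DecidableEq ι] (ε : ℕ) (w : ι → ℕ) (E : Finset ι)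
    (A : ℕ → R) :
    aeval (1 + shift) (((X - 1) ^ ε * ∏ i ∈ E, (X ^ w i + 1) : R[X]).comp (X - 1)) A =
      ((shift - 1) ^ ε : Module.End R (ℕ → R))
        (fun l => ∑ T ∈ E.powerset, A (l + ∑ i ∈ T, w i)) := by
  rw [aeval_comp, map_sub, aeval_X, map_one, add_sub_cancel_left, map_mul, map_pow, map_sub,
    aeval_X, map_one, prod_X_pow_add_one, map_sum, Module.End.mul_apply]
  congr 1
  funext l
  simp only [map_pow, aeval_X, LinearMap.coe_sum, Finset.sum_apply, shift_pow_apply]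

end CharacteristicPolynomial

open Classical in
theorem exists_shift_sub_one_pow_sum_neg_one_pow_choose {ι : Type*} [DecidableEq ι] {k : ℕ}
    (hk : 1 < k) (m : ℕ) {w : ι → ℕ} {E : Finset ι} (hw : Set.InjOn w E)
    (hw0 : ∀ i ∈ E, 0 < w i) (hsum : ∑ i ∈ E, 2 ^ w i = 2 * (k / 2)) {ε : ℕ}
    (hε : ε = if ∃ t : ℕ, k = 2 ^ t then 0 else 1) :
    ∃ c : ℤ, ((shift - 1) ^ ε : Module.End ℤ (ℕ → ℤ))
      (fun l => ∑ T ∈ E.powerset, (-1) ^ (l + ∑ i ∈ T, 2 ^ w i + m).choose k) =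
        fun l => (-1) ^ l * c := by
  simp_rw [add_right_comm _ _ m]
  rcases Nat.even_or_odd' k with ⟨j, rfl | rfl⟩
  · rw [Nat.mul_div_cancel_left j two_pos] at hsum
    simp_rw [← hsum, sum_powerset_neg_one_pow_choose_sum_two_pow hw]
    split_ifs at hε with hpow
    · obtain ⟨t, ht⟩ := hpow
      refine ⟨0, funext fun l => ?_⟩
      rw [hε, card_eq_one_of_sum_two_pow_eq_two_pow hw (hsum.trans ht)]
      simp
    · exact ⟨0, funext fun l => by simp [hε, shift_sub_one_apply]⟩
  · have hε1 : ε = 1 := by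
      rw [hε, if_neg]
      rintro ⟨_ | t, ht⟩
      · rw [pow_zero] at ht; omega
      · rw [pow_succ] at ht; omega
    rw [show 2 * ((2 * j + 1) / 2) = 2 * j by omega] at hsum
    simp_rw [← hsum, sum_powerset_neg_one_pow_choose_sum_two_pow_add_one hw hw0]
    refine ⟨-2 * (-1) ^ m, funext fun l => ?_⟩
    rw [hε1, pow_one, shift_sub_one_apply]
    ring

section ExponentialSum

def finsetEquivIndicator (α : Type*) [Fintype α] [DecidableEq α] : Finset α ≃ (α → ZMod 2) where
  toFun A i := if i ∈ A then 1 else 0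
  invFun x := univ.filter fun i => x i = 1
  left_inv A := by ext i; by_cases h : i ∈ A <;> simp [h]
  right_inv x := by
    funext i
    rcases (by decide : ∀ z : ZMod 2, z = 0 ∨ z = 1) (x i) with h | h <;> simp [h]

theorem sigma_finsetEquivIndicator (n j : ℕ) (A : Finset (Fin n)) :
    sigma n j (finsetEquivIndicator (Fin n) A) = ((#A).choose j : ℕ) := by
  have hsub : {B ∈ powersetCard j (univ : Finset (Fin n)) | ∀ i ∈ B, i ∈ A} = powersetCard j A := by
    ext B; simp only [mem_filter, mem_powersetCard, subset_univ, true_and]; tauto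
  simp only [sigma, finsetEquivIndicator, Equiv.coe_fn_mk, prod_boole]
  rw [← card_powersetCard, ← hsub, natCast_card_filter]
  -- the two sides differ only in the `Decidable` instances of their `if`s
  congr!

theorem Nat.sum_range_choose_mul_choose_sub {m k : ℕ} (hmk : m ≤ k) (l : ℕ) :
    ∑ i ∈ range (m + 1), m.choose i * l.choose (k - i) = (m + l).choose k := by
  rw [Nat.add_choose_eq, Finset.Nat.sum_antidiagonal_eq_sum_range_succ_mk]
  refine sum_subset (range_subset_range.2 (by omega)) fun i hi hni => ?_
  rw [Nat.choose_eq_zero_of_lt (by simp at hi hni; omega), zero_mul]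

theorem expSum_sum_choose_mul_sigma {m k : ℕ} (hmk : m ≤ k) (n : ℕ) :
    expSum (fun x : Fin n → ZMod 2 =>
      ∑ i ∈ range (m + 1), (m.choose i : ZMod 2) * sigma n (k - i) x) =
      ∑ l ∈ range (n + 1), (-1 : ℤ) ^ (l + m).choose k * n.choose l := by
  have hG : ∀ A : Finset (Fin n), ∑ i ∈ range (m + 1),
      (m.choose i : ZMod 2) * sigma n (k - i) (finsetEquivIndicator (Fin n) A) =
      ((#A + m).choose k : ℕ) := by
    intro A
    simp only [sigma_finsetEquivIndicator, ← Nat.cast_mul, ← Nat.cast_sum]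
    rw [Nat.sum_range_choose_mul_choose_sub hmk, add_comm]
  rw [expSum, ← (finsetEquivIndicator (Fin n)).sum_comp]
  simp only [hG, ZMod.val_natCast, ← neg_one_pow_eq_pow_mod_two]
  rw [← powerset_univ, sum_powerset_apply_card (fun l => (-1 : ℤ) ^ (l + m).choose k),
    card_univ, Fintype.card_fin]
  simp only [nsmul_eq_mul, mul_comm]

end ExponentialSum

open Polynomial in
open Classical in
theorem perturbed_sum_satisfies_minimal_recurrence_general
    (k m : ℕ) (hk : 1 < k) (hmk : m ≤ k)
    (s : ℕ) (e : Fin s → ℕ) (he0 : ∀ i, 0 < e i) (hemono : StrictMono e)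
    (hexp : 2 * (k / 2) + 1 = 1 + ∑ i : Fin s, 2 ^ e i)
    (ε : ℕ) (hε : ε = if ∃ t : ℕ, k = 2 ^ t then 0 else 1)
    (p : Polynomial ℤ)
    (hp : p = (X - C 2) ^ ε *
      ∏ i : Fin s, (Polynomial.cyclotomic (2 ^ (e i + 1)) ℤ).comp (X - 1))
    (d : ℕ) (hd : d = 2 * (k / 2) + ε)
    (b : ℕ → ℤ)
    (hb : ∀ n : ℕ, b n =
      ∑ l ∈ Finset.range (n + 1), (-1 : ℤ) ^ Nat.choose (l + m) k * (n.choose l : ℤ)) :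
    (∀ n : ℕ, k ≤ n →
      b n = expSum (fun x : Fin n → ZMod 2 =>
        ∑ i ∈ Finset.range (m + 1), (Nat.choose m i : ZMod 2) * sigma n (k - i) x)) ∧
    (∀ n : ℕ, 1 ≤ n → b (n + d) = ∑ i ∈ Finset.range d, (-(p.coeff i)) * b (n + i)) := by
  refine ⟨fun n _ => by rw [hb, expSum_sum_choose_mul_sigma hmk], fun n hn => ?_⟩
  rw [X_sub_C_two_pow_mul_prod_cyclotomic_comp] at hp
  have he : ∀ i ∈ univ, 2 ^ e i ≠ 0 := fun i _ => by positivity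
  have hpdeg : p.natDegree = d := by
    rw [hp, natDegree_comp_X_sub_one, natDegree_X_sub_one_pow_mul_prod_X_pow_add_one ε he]
    omega
  obtain ⟨c, hc⟩ := exists_shift_sub_one_pow_sum_neg_one_pow_choose hk m (E := univ)
    hemono.injective.injOn (fun i _ => he0 i) (by omega) hε
  have hb' : b = binomialTransform fun l => (-1) ^ (l + m).choose k := funext hb
  rw [hb', ← hpdeg]
  refine binomialTransform_add_natDegree_of_monic
    (hp ▸ (monic_X_sub_one_pow_mul_prod_X_pow_add_one ε he).comp_X_sub_one) ?_
  rw [hp, aeval_one_add_shift_comp_X_sub_one, hc, binomialTransform_neg_one_pow_mul c (by omega)]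

open Polynomial in
open Classical in
/-- The sequence `b_n = Σ_{l=0}^n (-1)^{C(l+m,k)} C(n,l)`, which equals
`S(Σ_{j=0}^m C(m,j) σ_{n,k−j})` for `n ≥ k`, satisfies the homogeneous linear
recurrence with characteristic polynomial
`p_k(X) = (X−2)^{ε(k)} Π_{l=1}^s Φ_{2^{a_l+1}}(X−1)` of degree `d = 2⌊k/2⌋ + ε(k)`. -/
theorem perturbed_sum_satisfies_minimal_recurrence
    (k m : ℕ) (hk : 1 < k) (hm : 1 ≤ m) (hmk : m ≤ k)
    (s : ℕ) (e : Fin s → ℕ) (he0 : ∀ i, 0 < e i) (hemono : StrictMono e)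
    (hexp : 2 * (k / 2) + 1 = 1 + ∑ i : Fin s, 2 ^ e i)
    (ε : ℕ) (hε : ε = if ∃ t : ℕ, k = 2 ^ t then 0 else 1)
    (p : Polynomial ℤ)
    (hp : p = (X - C 2) ^ ε *
      ∏ i : Fin s, (Polynomial.cyclotomic (2 ^ (e i + 1)) ℤ).comp (X - 1))
    (d : ℕ) (hd : d = 2 * (k / 2) + ε)
    (b : ℕ → ℤ)
    (hb : ∀ n : ℕ, b n =
      ∑ l ∈ Finset.range (n + 1), (-1 : ℤ) ^ Nat.choose (l + m) k * (n.choose l : ℤ)) :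
    (∀ n : ℕ, k ≤ n →
      b n = expSum (fun x : Fin n → ZMod 2 =>
        ∑ i ∈ Finset.range (m + 1), (Nat.choose m i : ZMod 2) * sigma n (k - i) x)) ∧
    (∀ n : ℕ, 1 ≤ n → b (n + d) = ∑ i ∈ Finset.range d, (-(p.coeff i)) * b (n + i)) :=
  perturbed_sum_satisfies_minimal_recurrence_general k m hk hmk s e he0 hemono hexp ε hε p hp d hd b
    hb
end

section
/- Let k and n be positive integers. Then Σ_{l=0}^{n} (-1)^{C(l,2k+1)} · (1 − (-1)^{C(l,2k)}) · C(n,l) = Σ_{l=0}^{n−1} (-1)^{C(l,2k)} · (1 − (-1)^{C(l,2k−1)}) · C(n−1,l). -/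
/-!
Write `g l` for the summand on the left without its binomial coefficient. Pascal's rule
`C(n, l) = C(n-1, l) + C(n-1, l-1)` turns the left side into `Σ_l (g l + g (l+1)) C(n-1, l)`,
so it suffices that `g l + g (l+1)` is the summand on the right. Pascal's rule again, in the
exponents, reduces this to a sign identity which holds whenever `C(l, 2k-1)` is even, and
otherwise because `C(l, 2k)` and `C(l, 2k+1)` then have the same parity (Lucas's theorem mod 2).
-/

open Finset

theorem sum_range_mul_choose_succ {R : Type*} [CommSemiring R] (f : ℕ → R) (n : ℕ) :
    ∑ l ∈ range (n + 2), f l * ((n + 1).choose l : R) =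
      ∑ l ∈ range (n + 1), (f l + f (l + 1)) * (n.choose l : R) := by
  have hlow : ∑ l ∈ range (n + 1), f l * (n.choose l : R) =
      f 0 + ∑ l ∈ range (n + 1), f (l + 1) * (n.choose (l + 1) : R) := by
    rw [sum_range_succ (fun l ↦ f (l + 1) * _), Nat.choose_succ_self, Nat.cast_zero, mul_zero,
      add_zero, sum_range_succ' (fun l ↦ f l * _), Nat.choose_zero_right, Nat.cast_one, mul_one,
      add_comm]
  simp only [sum_range_succ' _ (n + 1), Nat.choose_succ_succ', Nat.cast_add, mul_add, add_mul,
    sum_add_distrib, Nat.choose_zero_right, Nat.cast_one, mul_one, hlow]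
  ring

namespace Nat

theorem even_choose_of_even_of_odd {n k : ℕ} (hn : Even n) (hk : Odd k) : Even (n.choose k) := by
  have h := Choose.choose_modEq_choose_mod_mul_choose_div_nat (n := n) (k := k) (p := 2)
  rw [Nat.even_iff.mp hn, Nat.odd_iff.mp hk, Nat.choose_zero_succ, zero_mul] at h
  exact Nat.even_iff.mpr h

theorem choose_succ_modEq_choose_of_odd_of_even {n k : ℕ} (hn : Odd n) (hk : Even k) :
    n.choose (k + 1) ≡ n.choose k [MOD 2] := by
  have h₀ := Choose.choose_modEq_choose_mod_mul_choose_div_nat (n := n) (k := k) (p := 2)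
  have h₁ := Choose.choose_modEq_choose_mod_mul_choose_div_nat (n := n) (k := k + 1) (p := 2)
  have hk2 := Nat.even_iff.mp hk
  rw [Nat.odd_iff.mp hn, hk2] at h₀
  rw [Nat.odd_iff.mp hn, show (k + 1) % 2 = 1 by omega, show (k + 1) / 2 = k / 2 by omega] at h₁
  simp only [Nat.choose_self, Nat.choose_zero_right, one_mul] at h₀ h₁
  exact h₁.trans h₀.symm

theorem choose_add_two_modEq_of_odd_choose {n m : ℕ} (hm : Odd m) (hnm : Odd (n.choose m)) :
    n.choose (m + 2) ≡ n.choose (m + 1) [MOD 2] := by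
  have hn : Odd n := Nat.not_even_iff_odd.mp fun hn ↦
    Nat.not_even_iff_odd.mpr hnm (even_choose_of_even_of_odd hn hm)
  exact choose_succ_modEq_choose_of_odd_of_even hn hm.add_one

end Nat

theorem neg_one_pow_congr_of_modEq_two {R : Type*} [Ring R] {a b : ℕ} (h : a ≡ b [MOD 2]) :
    (-1 : R) ^ a = (-1) ^ b := by
  rw [neg_one_pow_eq_pow_mod_two, h, ← neg_one_pow_eq_pow_mod_two]

theorem sign_choose_add_sign_choose_succ {l m : ℕ} (hm : Odd m) :
    (-1 : ℤ) ^ l.choose (m + 2) * (1 - (-1) ^ l.choose (m + 1)) +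
        (-1) ^ (l + 1).choose (m + 2) * (1 - (-1) ^ (l + 1).choose (m + 1)) =
      (-1) ^ l.choose (m + 1) * (1 - (-1) ^ l.choose m) := by
  set a := (-1 : ℤ) ^ l.choose m
  set b := (-1 : ℤ) ^ l.choose (m + 1)
  set c := (-1 : ℤ) ^ l.choose (m + 2)
  have hb : b * b = 1 := by rw [← mul_pow]; norm_num
  have hc : c * (1 - a) = b * (1 - a) := by
    rcases Nat.even_or_odd (l.choose m) with ha | ha
    · simp [a, ha.neg_one_pow]
    · exact congrArg (· * (1 - a))
        (neg_one_pow_congr_of_modEq_two (Nat.choose_add_two_modEq_of_odd_choose hm ha))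
  -- Pascal's rule in the exponents makes the left side `c (1 - b) + b c (1 - a b) = c (1 - a)`.
  rw [Nat.choose_succ_succ', Nat.choose_succ_succ', pow_add, pow_add]
  linear_combination hc - a * c * hb

/-- For positive integers `k` and `n`,
`Σ_{l=0}^n (-1)^{C(l,2k+1)}(1−(-1)^{C(l,2k)})C(n,l)
 = Σ_{l=0}^{n−1} (-1)^{C(l,2k)}(1−(-1)^{C(l,2k−1)})C(n−1,l)`. -/
theorem binomial_sum_shift_identity (k n : ℕ) (hk : 1 ≤ k) (hn : 1 ≤ n) :
    ∑ l ∈ Finset.range (n + 1),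
        (-1 : ℤ) ^ Nat.choose l (2 * k + 1) *
          (1 - (-1 : ℤ) ^ Nat.choose l (2 * k)) * (n.choose l : ℤ) =
      ∑ l ∈ Finset.range n,
        (-1 : ℤ) ^ Nat.choose l (2 * k) *
          (1 - (-1 : ℤ) ^ Nat.choose l (2 * k - 1)) * ((n - 1).choose l : ℤ) := by
  obtain ⟨n, rfl⟩ : ∃ n', n = n' + 1 := ⟨n - 1, by omega⟩
  obtain ⟨m, hm, h2k⟩ : ∃ m, Odd m ∧ 2 * k = m + 1 := ⟨2 * k - 1, by grind, by omega⟩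
  rw [h2k, Nat.add_sub_cancel, Nat.add_sub_cancel]
  refine (sum_range_mul_choose_succ (fun l ↦ (-1 : ℤ) ^ l.choose (m + 1 + 1) *
    (1 - (-1) ^ l.choose (m + 1))) n).trans (sum_congr rfl fun l _ ↦ ?_)
  rw [sign_choose_add_sign_choose_succ hm]
end

section
/- Let k ≥ 1 and n ≥ 2k be integers. Then S(σ_{n,2k} + X₁) = S(σ_{n+1,2k+1} + X₁), where X₁ denotes the Boolean function given by the first coordinate. -/
open Finset

lemma hammingNorm_snoc {β : Type*} [Zero β] [DecidableEq β] {n : ℕ} (y : Fin n → β) (t : β) :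
    hammingNorm (Fin.snoc y t : Fin (n + 1) → β) = hammingNorm y + if t = 0 then 0 else 1 := by
  simp only [hammingNorm, card_filter, Fin.sum_univ_castSucc, Fin.snoc_castSucc, Fin.snoc_last]
  split_ifs <;> simp_all

lemma prod_eq_ite_subset_support {n : ℕ} (x : Fin n → ZMod 2) (A : Finset (Fin n)) :
    ∏ i ∈ A, x i = if A ⊆ ({i | x i ≠ 0} : Finset (Fin n)) then 1 else 0 := by
  split_ifs with h
  · exact prod_eq_one fun i hi => Fin.eq_one_of_ne_zero _ (mem_filter.mp (h hi)).2
  · obtain ⟨i, hiA, hi⟩ := not_subset.mp h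
    exact prod_eq_zero hiA (by simpa using hi)

lemma sigma_eq_choose_hammingNorm (n j : ℕ) (x : Fin n → ZMod 2) :
    sigma n j x = ((hammingNorm x).choose j : ZMod 2) := by
  have hfilter : {A ∈ powersetCard j (univ : Finset (Fin n)) |
      A ⊆ ({i | x i ≠ 0} : Finset (Fin n))} =
      powersetCard j ({i | x i ≠ 0} : Finset (Fin n)) := by
    ext A
    simp only [mem_filter, mem_powersetCard, subset_univ, true_and]
    tauto
  rw [sigma, sum_congr rfl fun A _ => prod_eq_ite_subset_support x A, sum_boole, hfilter,
    card_powersetCard, hammingNorm]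

lemma sigma_succ_snoc (n j : ℕ) (y : Fin n → ZMod 2) (t : ZMod 2) :
    sigma (n + 1) (j + 1) (Fin.snoc y t) = sigma n (j + 1) y + t * sigma n j y := by
  simp only [sigma_eq_choose_hammingNorm, hammingNorm_snoc]
  rcases (by decide : ∀ a : ZMod 2, a = 0 ∨ a = 1) t with rfl | rfl
  · simp
  · simp only [Nat.choose_succ_succ', if_neg one_ne_zero]
    push_cast
    ring

lemma Nat.cast_choose_two_mul_add_one_zmod_two (w k : ℕ) :
    (w.choose (2 * k + 1) : ZMod 2) = w.choose (2 * k) * ((w - 2 * k : ℕ) : ZMod 2) := by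
  have h := congrArg (Nat.cast : ℕ → ZMod 2) (Nat.choose_succ_right_eq w (2 * k))
  have hodd : ((2 * k + 1 : ℕ) : ZMod 2) = 1 := by
    rw [Nat.cast_add, Nat.cast_mul, show ((2 : ℕ) : ZMod 2) = 0 from rfl]
    simp
  rwa [Nat.cast_mul, Nat.cast_mul, hodd, mul_one] at h

lemma sigma_two_mul_add_one (n k : ℕ) (y : Fin n → ZMod 2) :
    sigma n (2 * k + 1) y = sigma n (2 * k) y * ((hammingNorm y - 2 * k : ℕ) : ZMod 2) := by
  simp only [sigma_eq_choose_hammingNorm, Nat.cast_choose_two_mul_add_one_zmod_two]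

lemma sum_pi_fin_succ {α M : Type*} [Fintype α] [AddCommMonoid M] {n : ℕ}
    (F : (Fin (n + 1) → α) → M) :
    ∑ x, F x = ∑ y : Fin n → α, ∑ t, F (Fin.snoc y t) := by
  rw [← (Fin.snocEquiv fun _ => α).sum_comp, Fintype.sum_prod_type, sum_comm]
  rfl

lemma sum_neg_one_pow_val_mul_add (b c d : ZMod 2) :
    ∑ t : ZMod 2, (-1 : ℤ) ^ (b * c + t * b + d).val = (-1) ^ d.val + (-1) ^ (b + d).val := by
  revert b c d
  decide

lemma expSum_apply_eq_zero {n : ℕ} (i : Fin n) : expSum (fun x => x i) = 0 := by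
  have hshift := Equiv.sum_comp (Equiv.addRight (Pi.single i 1))
    fun x : Fin n → ZMod 2 => (-1 : ℤ) ^ (x i).val
  have hflip : ∀ x : Fin n → ZMod 2,
      (-1 : ℤ) ^ ((x + Pi.single i 1 : Fin n → ZMod 2) i).val = -(-1) ^ (x i).val := by
    intro x
    rw [Pi.add_apply, Pi.single_eq_same]
    generalize x i = a
    revert a
    decide
  simp only [Equiv.coe_addRight, hflip, sum_neg_distrib] at hshift
  rw [expSum]
  omega

lemma expSum_sigma_two_mul_add_one_add (n k : ℕ) (f : (Fin n → ZMod 2) → ZMod 2) :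
    expSum (fun x : Fin (n + 1) → ZMod 2 => sigma (n + 1) (2 * k + 1) x + f (Fin.init x)) =
      expSum f + expSum (fun y => sigma n (2 * k) y + f y) := by
  rw [expSum, sum_pi_fin_succ, expSum, expSum, ← sum_add_distrib]
  refine sum_congr rfl fun y _ => ?_
  simp_rw [Fin.init_snoc, sigma_succ_snoc, sigma_two_mul_add_one]
  exact sum_neg_one_pow_val_mul_add _ _ _

/-- For `k ≥ 1` and `n ≥ 2k`, `S(σ_{n,2k} + X₁) = S(σ_{n+1,2k+1} + X₁)`. -/
theorem exponential_sum_linear_perturbation_shift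
    (k n : ℕ) (hk : 1 ≤ k) (hn : 2 * k ≤ n) :
    expSum (fun x : Fin n → ZMod 2 => sigma n (2 * k) x + x ⟨0, by omega⟩) =
      expSum (fun x : Fin (n + 1) → ZMod 2 =>
        sigma (n + 1) (2 * k + 1) x + x ⟨0, by omega⟩) := by
  have h := expSum_sigma_two_mul_add_one_add n k (fun y => y ⟨0, by omega⟩)
  rw [expSum_apply_eq_zero, zero_add] at h
  exact h.symm
end

section
/- For every positive integer k and all non-negative integers l and m, (-1)^{C(l+m,2k)} − (-1)^{C(l,2k)} = (-1)^{C(l+m,2k+1)} + (-1)^{C(l+1+m,2k+1)} − (-1)^{C(l,2k+1)} − (-1)^{C(l+1,2k+1)}. -/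
lemma choose_two_k_mod : ∀ (n k : ℕ),
    Nat.choose n (2 * k + 1) % 2 = (n % 2) * Nat.choose (n / 2) k % 2 ∧
    Nat.choose n (2 * k) % 2 = Nat.choose (n / 2) k % 2 := by
  intro n k
  haveI : Fact (Nat.Prime 2) := ⟨Nat.prime_two⟩
  have h1 := Choose.choose_modEq_choose_mod_mul_choose_div_nat (p := 2) (n := n) (k := 2 * k + 1)
  have h2 := Choose.choose_modEq_choose_mod_mul_choose_div_nat (p := 2) (n := n) (k := 2 * k)
  rw [Nat.ModEq] at h1 h2
  constructor
  · rw [h1]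
    have e1 : (2 * k + 1) % 2 = 1 := by omega
    have e2 : (2 * k + 1) / 2 = k := by omega
    rw [e1, e2, Nat.choose_one_right]
  · rw [h2]
    have e1 : (2 * k) % 2 = 0 := by omega
    have e2 : (2 * k) / 2 = k := by omega
    rw [e1, e2, Nat.choose_zero_right, Nat.one_mul]

lemma key_odd (n k : ℕ) (h : Odd (Nat.choose n (2 * k + 1))) :
    Odd (Nat.choose n (2 * k)) := by
  obtain ⟨h1, h2⟩ := choose_two_k_mod n k
  rw [Nat.odd_iff] at h ⊢
  rw [h2]
  rw [h1] at h
  rcases Nat.even_or_odd (Nat.choose (n / 2) k) with he | ho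
  · exfalso
    rw [Nat.even_iff] at he
    rw [Nat.mul_mod, he, Nat.mul_zero] at h
    simp at h
  · rwa [Nat.odd_iff] at ho

lemma step (k n : ℕ) :
    (-1 : ℤ) ^ Nat.choose n (2 * k) =
      (-1 : ℤ) ^ Nat.choose n (2 * k + 1) + (-1 : ℤ) ^ Nat.choose (n + 1) (2 * k + 1) - 1 := by
  have hp : Nat.choose (n + 1) (2 * k + 1) = Nat.choose n (2 * k) + Nat.choose n (2 * k + 1) :=
    Nat.choose_succ_succ n (2 * k)
  rw [hp, pow_add]
  rcases Nat.even_or_odd (Nat.choose n (2 * k)) with ha | ha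
  · have hb : Even (Nat.choose n (2 * k + 1)) := by
      by_contra hb
      rw [Nat.not_even_iff_odd] at hb
      exact (Nat.not_odd_iff_even.mpr ha) (key_odd n k hb)
    rw [ha.neg_one_pow, hb.neg_one_pow]; ring
  · rw [ha.neg_one_pow]
    rcases Nat.even_or_odd (Nat.choose n (2 * k + 1)) with hb | hb
    · rw [hb.neg_one_pow]; ring
    · rw [hb.neg_one_pow]; ring

/-- For every positive integer `k` and all non-negative integers `l`, `m`:
`(-1)^{C(l+m,2k)} − (-1)^{C(l,2k)}
 = (-1)^{C(l+m,2k+1)} + (-1)^{C(l+1+m,2k+1)} − (-1)^{C(l,2k+1)} − (-1)^{C(l+1,2k+1)}`. -/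
theorem sign_binomial_identity (k l m : ℕ) (hk : 1 ≤ k) :
    (-1 : ℤ) ^ Nat.choose (l + m) (2 * k) - (-1 : ℤ) ^ Nat.choose l (2 * k) =
      (-1 : ℤ) ^ Nat.choose (l + m) (2 * k + 1) +
        (-1 : ℤ) ^ Nat.choose (l + 1 + m) (2 * k + 1) -
        (-1 : ℤ) ^ Nat.choose l (2 * k + 1) -
        (-1 : ℤ) ^ Nat.choose (l + 1) (2 * k + 1) := by
  have e : l + 1 + m = l + m + 1 := by ring
  rw [e, step k (l + m), step k l]
  ring
end

section
/- Let k be a positive integer, let t be an integer with 0 ≤ t ≤ 2k, and let l, m be non-negative integers. Then (-1)^{Σ_{i=0}^{t} C(t,i)C(l+m,2k−i)} − (-1)^{Σ_{i=0}^{t} C(t,i)C(l,2k−i)} = (-1)^{Σ_{i=0}^{t} C(t,i)C(l+m,2k+1−i)} + (-1)^{Σ_{i=0}^{t} C(t,i)C(l+m+1,2k+1−i)} − (-1)^{Σ_{i=0}^{t} C(t,i)C(l,2k+1−i)} − (-1)^{Σ_{i=0}^{t} C(t,i)C(l+1,2k+1−i)}. -/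
/-!
Since `t ≤ 2k`, every sum is a complete Vandermonde convolution, so the identity is about
`a = C(n, 2k)`, `b = C(n, 2k+1)` and, by Pascal, `C(n+1, 2k+1) = a + b`, for `n = t+l+m` and
`n = t+l`. The signs then satisfy `(-1)^a = (-1)^b + (-1)^(a+b) - 1` unless `a` is even and `b`
odd, and that case cannot occur because `C(n, 2k+1) (2k+1) = C(n, 2k) (n - 2k)`.
-/

open Finset

theorem Nat.sum_range_choose_mul_choose_sub_s10 {t r : ℕ} (n : ℕ) (h : t ≤ r) :
    ∑ i ∈ range (t + 1), t.choose i * n.choose (r - i) = (t + n).choose r := by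
  rw [Nat.add_choose_eq,
    Nat.sum_antidiagonal_eq_sum_range_succ (fun i j ↦ t.choose i * n.choose j)]
  refine sum_subset (range_subset_range.2 (Nat.succ_le_succ h)) fun i _ hi ↦ ?_
  rw [mem_range, Nat.lt_succ_iff, not_le] at hi
  rw [Nat.choose_eq_zero_of_lt hi, zero_mul]

theorem Nat.odd_choose_of_odd_choose_succ {n k : ℕ} (h : Odd (n.choose (k + 1))) (hk : Even k) :
    Odd (n.choose k) := by
  have : Odd (n.choose (k + 1) * (k + 1)) := h.mul hk.add_one
  rw [Nat.choose_succ_right_eq] at this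
  exact (Nat.odd_mul.1 this).1

theorem neg_one_pow_eq_add_neg_one_pow_add_sub_one {a b : ℕ} (h : Odd b → Odd a) :
    (-1 : ℤ) ^ a = (-1) ^ b + (-1) ^ (a + b) - 1 := by
  rcases Nat.even_or_odd b with hb | hb
  · rw [pow_add, hb.neg_one_pow]; ring
  · rw [pow_add, hb.neg_one_pow, (h hb).neg_one_pow]; ring

theorem neg_one_pow_choose_two_mul (n k : ℕ) :
    (-1 : ℤ) ^ n.choose (2 * k) =
      (-1) ^ n.choose (2 * k + 1) + (-1) ^ (n + 1).choose (2 * k + 1) - 1 := by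
  rw [Nat.choose_succ_succ]
  exact neg_one_pow_eq_add_neg_one_pow_add_sub_one
    fun h ↦ Nat.odd_choose_of_odd_choose_succ h (even_two_mul k)

theorem sign_binomial_identity_general_general (k t l m : ℕ) (ht : t ≤ 2 * k) :
    (-1 : ℤ) ^ (∑ i ∈ Finset.range (t + 1), Nat.choose t i * Nat.choose (l + m) (2 * k - i)) -
        (-1 : ℤ) ^ (∑ i ∈ Finset.range (t + 1), Nat.choose t i * Nat.choose l (2 * k - i)) =
      (-1 : ℤ) ^ (∑ i ∈ Finset.range (t + 1),
          Nat.choose t i * Nat.choose (l + m) (2 * k + 1 - i)) +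
        (-1 : ℤ) ^ (∑ i ∈ Finset.range (t + 1),
          Nat.choose t i * Nat.choose (l + m + 1) (2 * k + 1 - i)) -
        (-1 : ℤ) ^ (∑ i ∈ Finset.range (t + 1),
          Nat.choose t i * Nat.choose l (2 * k + 1 - i)) -
        (-1 : ℤ) ^ (∑ i ∈ Finset.range (t + 1),
          Nat.choose t i * Nat.choose (l + 1) (2 * k + 1 - i)) := by
  have ht' : t ≤ 2 * k + 1 := ht.trans (Nat.le_succ _)
  simp only [Nat.sum_range_choose_mul_choose_sub_s10 _ ht, Nat.sum_range_choose_mul_choose_sub_s10 _ ht',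
    ← add_assoc, neg_one_pow_choose_two_mul]
  ring

/-- For a positive integer `k`, `0 ≤ t ≤ 2k`, and non-negative integers `l`, `m`:
`(-1)^{Σ_i C(t,i)C(l+m,2k−i)} − (-1)^{Σ_i C(t,i)C(l,2k−i)}
 = (-1)^{Σ_i C(t,i)C(l+m,2k+1−i)} + (-1)^{Σ_i C(t,i)C(l+m+1,2k+1−i)}
   − (-1)^{Σ_i C(t,i)C(l,2k+1−i)} − (-1)^{Σ_i C(t,i)C(l+1,2k+1−i)}`. -/
theorem sign_binomial_identity_general (k t l m : ℕ) (hk : 1 ≤ k) (ht : t ≤ 2 * k) :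
    (-1 : ℤ) ^ (∑ i ∈ Finset.range (t + 1), Nat.choose t i * Nat.choose (l + m) (2 * k - i)) -
        (-1 : ℤ) ^ (∑ i ∈ Finset.range (t + 1), Nat.choose t i * Nat.choose l (2 * k - i)) =
      (-1 : ℤ) ^ (∑ i ∈ Finset.range (t + 1),
          Nat.choose t i * Nat.choose (l + m) (2 * k + 1 - i)) +
        (-1 : ℤ) ^ (∑ i ∈ Finset.range (t + 1),
          Nat.choose t i * Nat.choose (l + m + 1) (2 * k + 1 - i)) -
        (-1 : ℤ) ^ (∑ i ∈ Finset.range (t + 1),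
          Nat.choose t i * Nat.choose l (2 * k + 1 - i)) -
        (-1 : ℤ) ^ (∑ i ∈ Finset.range (t + 1),
          Nat.choose t i * Nat.choose (l + 1) (2 * k + 1 - i)) :=
  sign_binomial_identity_general_general k t l m ht
end

section
/- Let r ≥ 2 be an integer. For 1 ≤ l ≤ 2^{r−1}−1 set ξ_l = exp(iπl/2^{r−1}) and λ_l = 1 + ξ_l^{−1}. Let d₀ ∈ ℝ and d₁, …, d_{2^{r−1}−1} ∈ ℂ, and define the real sequence a_n = d₀·2ⁿ + 2·Σ_{l=1}^{2^{r−1}−1} Re(d_l·λ_lⁿ). Set t₀(n) = d₀·2ⁿ and t_l(n) = Re(d_l·λ_lⁿ) for 1 ≤ l ≤ 2^{r−1}−1. Then there exists an integer n₀ such that for every n > n₀, a_n = 0 if and only if t_l(n) = 0 for all 0 ≤ l ≤ 2^{r−1}−1. -/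
/-!
Write `K = 2^{r-1}` and `θ_l = πl/(2K)`. Then `λ_l = 1 + e^{-2iθ_l} = 2cos θ_l · e^{-iθ_l}` and
`λ₀ = 2`, so `a_n = Σ_{l=0}^{K-1} Re(e_l λ_lⁿ)` with `e₀ = d₀`, `e_l = 2d_l`. The moduli `2cos θ_l`
strictly decrease in `l`, and `e^{-iθ_l}` is a `4K`-th root of unity, so `Re(e_l λ_lⁿ)/|λ_l|ⁿ` is
periodic in `n`: whenever it is nonzero it is bounded away from `0`. If `a_n = 0` while some term
is nonzero, the first nonzero term is of exact order `|λ_L|ⁿ` and, for large `n`, outweighs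
the sum of all later ones, which is `o(|λ_L|ⁿ)`.
-/

open Filter Asymptotics Finset
open scoped Real

section Dominance

variable {ι : Type*} [LinearOrder ι] {s : Finset ι} {t : ι → ℕ → ℝ} {ρ : ι → ℝ}

theorem eventually_sum_ne_zero_of_first_ne_zero (hρ : StrictAntiOn ρ s)
    (hρ_nonneg : ∀ l ∈ s, 0 ≤ ρ l) (h_upper : ∀ l ∈ s, t l =O[atTop] fun n => ρ l ^ n)
    {L : ι} (hL : L ∈ s) {c : ℝ} (hc : 0 < c)
    (h_lower : ∀ n, t L n ≠ 0 → c * ρ L ^ n ≤ |t L n|) :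
    ∀ᶠ n in atTop, t L n ≠ 0 → (∀ l ∈ s, l < L → t l n = 0) → ∑ l ∈ s, t l n ≠ 0 := by
  have h_tail : (fun n => ∑ l ∈ s with L < l, t l n) =o[atTop] fun n => ρ L ^ n := by
    refine IsLittleO.fun_sum fun l hl => ?_
    rw [mem_filter] at hl
    exact (h_upper l hl.1).trans_isLittleO <|
      isLittleO_pow_pow_of_lt_left (hρ_nonneg l hl.1) (hρ hL hl.1 hl.2)
  filter_upwards [h_tail.bound (half_pos hc)] with n hn htL hbelow hsum
  have hsplit : ∑ l ∈ s, t l n = ∑ l ∈ s with L < l, t l n + t L n := by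
    rw [← sum_filter_add_sum_filter_not s (L < ·)]
    refine congrArg _ (sum_eq_single_of_mem L (by simp [hL]) fun l hl hne => ?_)
    rw [mem_filter, not_lt] at hl
    exact hbelow l hl.1 (lt_of_le_of_ne hl.2 hne)
  have htL_eq : t L n = -∑ l ∈ s with L < l, t l n := by linarith
  rw [Real.norm_eq_abs, Real.norm_eq_abs, abs_of_nonneg (pow_nonneg (hρ_nonneg L hL) n),
    ← abs_neg, ← htL_eq] at hn
  have := abs_pos.2 htL
  have := h_lower n htL
  linarith

theorem eventually_sum_eq_zero_iff_forall_eq_zero (hρ : StrictAntiOn ρ s)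
    (hρ_nonneg : ∀ l ∈ s, 0 ≤ ρ l) (h_upper : ∀ l ∈ s, t l =O[atTop] fun n => ρ l ^ n)
    (h_lower : ∀ l ∈ s, ∃ c > 0, ∀ n, t l n ≠ 0 → c * ρ l ^ n ≤ |t l n|) :
    ∀ᶠ n in atTop, (∑ l ∈ s, t l n = 0 ↔ ∀ l ∈ s, t l n = 0) := by
  have h_first : ∀ L ∈ s, ∀ᶠ n in atTop,
      t L n ≠ 0 → (∀ l ∈ s, l < L → t l n = 0) → ∑ l ∈ s, t l n ≠ 0 := fun L hL =>
    let ⟨_, hc, hlow⟩ := h_lower L hL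
    eventually_sum_ne_zero_of_first_ne_zero hρ hρ_nonneg h_upper hL hc hlow
  filter_upwards [(eventually_all_finset s).2 h_first] with n hn
  refine ⟨fun hsum => ?_, sum_eq_zero⟩
  by_contra! hne
  have hS : (s.filter (t · n ≠ 0)).Nonempty := by simpa [Finset.Nonempty] using hne
  obtain ⟨hL, htL⟩ := mem_filter.1 ((s.filter (t · n ≠ 0)).min'_mem hS)
  refine hn _ hL htL (fun l hl hlt => ?_) hsum
  by_contra htl
  exact (min'_le _ l (mem_filter.2 ⟨hl, htl⟩)).not_gt hlt

end Dominance

theorem Function.Periodic.exists_pos_le_abs {f : ℕ → ℝ} {N : ℕ} (hf : Function.Periodic f N)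
    (hN : 0 < N) : ∃ c > 0, ∀ n, f n ≠ 0 → c ≤ |f n| := by
  let g : ℕ → ℝ := fun k => if f k = 0 then 1 else |f k|
  have hg : ∀ k, 0 < g k := fun k => by
    by_cases hk : f k = 0 <;> simp [g, hk]
  obtain ⟨k₀, -, hk₀⟩ := (range N).exists_min_image g (nonempty_range_iff.2 hN.ne')
  refine ⟨g k₀, hg k₀, fun n hn => ?_⟩
  have hmod : f (n % N) = f n := hf.map_mod_nat n
  calc g k₀ ≤ g (n % N) := hk₀ _ (mem_range.2 (Nat.mod_lt n hN))
    _ = |f n| := by simp [g, hmod, hn]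

namespace Complex

theorem re_mul_ofReal_mul_pow (e w : ℂ) (ρ : ℝ) (n : ℕ) :
    (e * (ρ * w) ^ n).re = ρ ^ n * (e * w ^ n).re := by
  rw [mul_pow, ← ofReal_pow, mul_left_comm, re_ofReal_mul]

theorem isBigO_re_mul_ofReal_mul_pow (e : ℂ) {w : ℂ} (hw : ‖w‖ = 1) (ρ : ℝ) :
    (fun n : ℕ => (e * (ρ * w) ^ n).re) =O[atTop] fun n => ρ ^ n := by
  refine IsBigO.of_bound ‖e‖ (Eventually.of_forall fun n => ?_)
  calc ‖(e * (ρ * w) ^ n).re‖ ≤ ‖e * (ρ * w) ^ n‖ := abs_re_le_norm _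
    _ = ‖e‖ * ‖ρ ^ n‖ := by simp [hw]

theorem exists_pos_mul_pow_le_abs_re_mul_ofReal_mul_pow (e : ℂ) {w : ℂ} {N : ℕ} (hN : 0 < N)
    (hw : w ^ N = 1) (ρ : ℝ) :
    ∃ c > 0, ∀ n, (e * (ρ * w) ^ n).re ≠ 0 → c * ρ ^ n ≤ |(e * (ρ * w) ^ n).re| := by
  have hper : Function.Periodic (fun n : ℕ => (e * w ^ n).re) N := fun n => by
    simp only [pow_add, hw, mul_one]
  obtain ⟨c, hc, hlow⟩ := hper.exists_pos_le_abs hN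
  refine ⟨c, hc, fun n hn => ?_⟩
  rw [re_mul_ofReal_mul_pow] at hn ⊢
  rw [abs_mul, mul_comm]
  exact mul_le_mul (le_abs_self _) (hlow n (right_ne_zero_of_mul hn)) hc.le (abs_nonneg _)

theorem one_add_inv_exp_two_mul_mul_I (θ : ℝ) :
    1 + (exp (2 * θ * I))⁻¹ = (2 * Real.cos θ : ℝ) * exp (-θ * I) := by
  push_cast
  rw [two_cos, add_mul, ← exp_add, ← exp_add, ← exp_neg]
  ring_nf
  simp [add_comm]

end Complex

theorem exp_neg_pi_mul_div_mul_I_pow_eq_one {K : ℕ} (hK : K ≠ 0) (l : ℕ) :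
    Complex.exp (-(π * l / (2 * K) : ℝ) * Complex.I) ^ (4 * K) = 1 := by
  rw [← Complex.exp_nat_mul, ← Complex.exp_int_mul_two_pi_mul_I (-l)]
  congr 1
  push_cast
  field_simp
  ring

theorem pi_mul_div_two_mul_mem_Icc {K l : ℕ} (hl : l ≤ K) :
    π * l / (2 * K) ∈ Set.Icc 0 (π / 2) := by
  refine ⟨by positivity, ?_⟩
  rw [show π * l / (2 * K) = π / 2 * (l / K) by ring]
  exact mul_le_of_le_one_right (by positivity)
    (div_le_one_of_le₀ (by exact_mod_cast hl) (by positivity))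

theorem strictAntiOn_two_mul_cos_pi_mul_div {K : ℕ} (hK : 0 < K) :
    StrictAntiOn (fun l : ℕ => 2 * Real.cos (π * l / (2 * K))) (Set.Iic K) := by
  intro a ha b hb hab
  have hθ : π * a / (2 * K) < π * b / (2 * K) := by gcongr
  have hIcc : Set.Icc 0 (π / 2) ⊆ Set.Icc 0 π :=
    Set.Icc_subset_Icc_right (by linarith [Real.pi_pos])
  have := Real.strictAntiOn_cos (hIcc (pi_mul_div_two_mul_mem_Icc ha))
    (hIcc (pi_mul_div_two_mul_mem_Icc hb)) hθ
  simp only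
  linarith

theorem two_mul_cos_pi_mul_div_nonneg {K l : ℕ} (hl : l ≤ K) :
    0 ≤ 2 * Real.cos (π * l / (2 * K)) := by
  obtain ⟨h0, h1⟩ := pi_mul_div_two_mul_mem_Icc hl
  exact mul_nonneg zero_le_two (Real.cos_nonneg_of_mem_Icc ⟨by linarith [Real.pi_pos], h1⟩)

def mergedCoeff (d₀ : ℝ) (d : ℕ → ℂ) (l : ℕ) : ℂ := if l = 0 then d₀ else 2 * d l

section MergedCoeff

variable {lam : ℕ → ℂ} {d₀ : ℝ} {d : ℕ → ℂ} {M n : ℕ}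

theorem re_mergedCoeff_zero_mul_pow (hlam : lam 0 = 2) :
    (mergedCoeff d₀ d 0 * lam 0 ^ n).re = d₀ * 2 ^ n := by
  rw [mergedCoeff, if_pos rfl, hlam]
  exact_mod_cast Complex.ofReal_re _

theorem re_mergedCoeff_mul_pow_of_mem_Icc_one {l : ℕ} (hl : l ∈ Icc 1 M) :
    (mergedCoeff d₀ d l * lam l ^ n).re = 2 * (d l * lam l ^ n).re := by
  have hl0 : l ≠ 0 := by rw [mem_Icc] at hl; omega
  simp [mergedCoeff, hl0, mul_assoc]

theorem sum_Icc_zero_re_mergedCoeff_mul_pow (hlam : lam 0 = 2) :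
    ∑ l ∈ Icc 0 M, (mergedCoeff d₀ d l * lam l ^ n).re =
      d₀ * 2 ^ n + 2 * ∑ l ∈ Icc 1 M, (d l * lam l ^ n).re := by
  rw [← insert_Icc_add_one_left_eq_Icc (Nat.zero_le M), sum_insert (by simp),
    re_mergedCoeff_zero_mul_pow hlam, mul_sum]
  exact congrArg _ (sum_congr rfl fun l hl => re_mergedCoeff_mul_pow_of_mem_Icc_one hl)

theorem forall_Icc_zero_re_mergedCoeff_mul_pow_eq_zero_iff (hlam : lam 0 = 2) :
    (∀ l ∈ Icc 0 M, (mergedCoeff d₀ d l * lam l ^ n).re = 0) ↔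
      d₀ * 2 ^ n = 0 ∧ ∀ l ∈ Icc 1 M, (d l * lam l ^ n).re = 0 := by
  rw [← insert_Icc_add_one_left_eq_Icc (Nat.zero_le M), forall_mem_insert,
    re_mergedCoeff_zero_mul_pow hlam]
  refine and_congr_right' (forall₂_congr fun l hl => ?_)
  rw [re_mergedCoeff_mul_pow_of_mem_Icc_one hl, mul_eq_zero, or_iff_right two_ne_zero]

end MergedCoeff

theorem eventual_vanishing_characterization_general
    (r : ℕ)
    (d₀ : ℝ) (d : ℕ → ℂ) (ξ lam : ℕ → ℂ)
    (hξ : ∀ l : ℕ, ξ l = Complex.exp (Real.pi * Complex.I * l / 2 ^ (r - 1)))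
    (hlam : ∀ l : ℕ, lam l = 1 + (ξ l)⁻¹)
    (a : ℕ → ℝ)
    (ha : ∀ n : ℕ, a n =
      d₀ * 2 ^ n + 2 * ∑ l ∈ Finset.Icc 1 (2 ^ (r - 1) - 1), (d l * lam l ^ n).re) :
    ∃ n₀ : ℕ, ∀ n : ℕ, n₀ < n →
      (a n = 0 ↔
        (d₀ * 2 ^ n = 0 ∧
          ∀ l ∈ Finset.Icc 1 (2 ^ (r - 1) - 1), (d l * lam l ^ n).re = 0)) := by
  set K := 2 ^ (r - 1) with hK_def
  have hK : 0 < K := by positivity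
  set ρ : ℕ → ℝ := fun l => 2 * Real.cos (π * l / (2 * K))
  set w : ℕ → ℂ := fun l => Complex.exp (-(π * l / (2 * K) : ℝ) * Complex.I)
  have hlam_eq : ∀ l, lam l = ρ l * w l := fun l => by
    rw [hlam, hξ, ← Complex.one_add_inv_exp_two_mul_mul_I]
    congr 3
    rw [hK_def]
    push_cast
    field_simp
  have hlam_zero : lam 0 = 2 := by simp [hlam_eq, ρ, w]
  have hw : ∀ l, w l ^ (4 * K) = 1 := exp_neg_pi_mul_div_mul_I_pow_eq_one hK.ne'
  have hs : ∀ l ∈ Icc 0 (K - 1), l ≤ K := fun l hl => by rw [mem_Icc] at hl; omega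
  have hev := eventually_sum_eq_zero_iff_forall_eq_zero (s := Icc 0 (K - 1))
    (t := fun l n => (mergedCoeff d₀ d l * lam l ^ n).re) (ρ := ρ)
    ((strictAntiOn_two_mul_cos_pi_mul_div hK).mono hs)
    (fun l hl => two_mul_cos_pi_mul_div_nonneg (hs l hl))
    (fun l _ => by
      simpa only [hlam_eq] using Complex.isBigO_re_mul_ofReal_mul_pow _
        (Complex.norm_eq_one_of_pow_eq_one (hw l) (by positivity)) (ρ l))
    (fun l _ => by
      simpa only [hlam_eq] using
        Complex.exists_pos_mul_pow_le_abs_re_mul_ofReal_mul_pow _ (by positivity) (hw l) (ρ l))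
  obtain ⟨n₀, hn₀⟩ := eventually_atTop.1 hev
  refine ⟨n₀, fun n hn => ?_⟩
  rw [ha, ← sum_Icc_zero_re_mergedCoeff_mul_pow hlam_zero, hn₀ n hn.le,
    forall_Icc_zero_re_mergedCoeff_mul_pow_eq_zero_iff hlam_zero]

open Complex in
/-- Let `ξ_l = exp(iπl/2^{r−1})`, `λ_l = 1 + ξ_l⁻¹`, and let
`a_n = d₀·2ⁿ + 2Σ_{l=1}^{2^{r−1}−1} Re(d_l λ_lⁿ)` be a real solution of the standard
recurrence. Then there is an `n₀` such that for all `n > n₀`, `a_n = 0` iff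
`t_l(n) = 0` for all `0 ≤ l ≤ 2^{r−1}−1`, where `t₀(n) = d₀·2ⁿ` and
`t_l(n) = Re(d_l λ_lⁿ)` for `l ≥ 1`. -/
theorem eventual_vanishing_characterization
    (r : ℕ) (hr : 2 ≤ r)
    (d₀ : ℝ) (d : ℕ → ℂ) (ξ lam : ℕ → ℂ)
    (hξ : ∀ l : ℕ, ξ l = Complex.exp (Real.pi * Complex.I * l / 2 ^ (r - 1)))
    (hlam : ∀ l : ℕ, lam l = 1 + (ξ l)⁻¹)
    (a : ℕ → ℝ)
    (ha : ∀ n : ℕ, a n =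
      d₀ * 2 ^ n + 2 * ∑ l ∈ Finset.Icc 1 (2 ^ (r - 1) - 1), (d l * lam l ^ n).re) :
    ∃ n₀ : ℕ, ∀ n : ℕ, n₀ < n →
      (a n = 0 ↔
        (d₀ * 2 ^ n = 0 ∧
          ∀ l ∈ Finset.Icc 1 (2 ^ (r - 1) - 1), (d l * lam l ^ n).re = 0)) :=
  eventual_vanishing_characterization_general r d₀ d ξ lam hξ hlam a ha
end

section
/- Let k ≥ 1 and j ≥ 1 be integers and let F : 𝔽₂ʲ → 𝔽₂ be a Boolean function. Define δ_l = Σ_{m=0}^{j} C_m(F)·(-1)^{C(l+m,k)} for l ≥ 0, so that S(σ_{n+j,k} + F) = Σ_{l=0}^{n} δ_l·C(n,l). Then there exists an integer n₀ such that for every n > n₀: Σ_{l=0}^{n} δ_l·C(n,l) = 0 if and only if there exists an integer z such that δ_a + δ_{n−a} = (-1)^{a−1}·z for all 0 ≤ a ≤ n. Moreover, in that case, if n is odd then necessarily z = 0, i.e. δ_{n−a} = −δ_a for all 0 ≤ a ≤ n. -/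
open Finset Filter Asymptotics ZMod

/-!
The coefficients `δ_l` are `2^k`-periodic (Lucas), hence periodic modulo `P = 2Q`, `Q = 2^k`.
Fourier inversion on `ZMod P` turns binomial sums into power sums:
`P · Σ_l ψ(l) C(n,l) = Σ_u 𝓕ψ(u) (1 + ζ^u)^n` with `ζ = e^{2πi/P}`. Apply this to
`ψ(a) = δ_a + δ_{n-a}`, whose binomial sum is twice that of `δ`. Its transform depends only on
`n mod P`, the terms at `u` and `-u` coincide, and `|1 + ζ^u| = |1 + ζ^v|` only for `v = ±u`.
So if `𝓕ψ(u) ≠ 0` for some `u ≠ Q`, the terms of largest modulus dominate and the sum cannot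
vanish once `n` is large. Hence a vanishing sum forces `𝓕ψ` to live at `u = Q`, i.e.
`ψ(a) = (-1)^a ψ(0)`; the converse is the vanishing of the alternating sum of binomials.
-/

theorem isLittleO_sum_mul_pow {𝕜 ι : Type*} [NormedField 𝕜] (s : Finset ι) (c z : ι → 𝕜)
    {ρ : ℝ} (h : ∀ i ∈ s, c i ≠ 0 → ‖z i‖ < ρ) :
    (fun n : ℕ ↦ ∑ i ∈ s, c i * z i ^ n) =o[atTop] fun n ↦ ρ ^ n := by
  refine IsLittleO.fun_sum fun i hi ↦ ?_
  by_cases hc : c i = 0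
  · simp [hc]
  refine IsLittleO.const_mul_left ?_ _
  rw [← isLittleO_norm_left]
  simpa only [norm_pow] using isLittleO_pow_pow_of_lt_left (norm_nonneg _) (h i hi hc)

theorem sum_range_reflect_mul_choose {R : Type*} [Semiring R] (f : ℕ → R) (n : ℕ) :
    ∑ l ∈ range (n + 1), f (n - l) * n.choose l = ∑ l ∈ range (n + 1), f l * n.choose l := by
  rw [← sum_range_reflect]
  refine sum_congr rfl fun l hl ↦ ?_
  have hl : l ≤ n := Nat.lt_succ_iff.1 (mem_range.1 hl)
  rw [Nat.add_sub_cancel, Nat.sub_sub_self hl, Nat.choose_symm hl]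

theorem choose_add_pow_modEq {p i N r : ℕ} (hp : p.Prime) (hr : r < p ^ i) :
    (N + p ^ i).choose r ≡ N.choose r [MOD p] := by
  rw [← ZMod.natCast_eq_natCast_iff, add_comm, Nat.add_choose_eq, Nat.cast_sum,
    sum_eq_single (0, r)]
  · simp
  · rintro ⟨a, b⟩ hab hne
    rw [HasAntidiagonal.mem_antidiagonal] at hab
    have ha0 : a ≠ 0 := by
      rintro rfl
      exact hne (by simp_all)
    rw [Nat.cast_mul, (ZMod.natCast_eq_zero_iff _ _).2 (hp.dvd_choose_pow ha0 (by omega)), zero_mul]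
  · simp

theorem periodic_neg_one_pow_choose (k : ℕ) :
    Function.Periodic (fun l : ℕ ↦ (-1 : ℤ) ^ l.choose k) (2 ^ k) := fun l ↦ by
  dsimp only
  rw [neg_one_pow_eq_pow_mod_two, choose_add_pow_modEq Nat.prime_two k.lt_two_pow_self,
    ← neg_one_pow_eq_pow_mod_two]

theorem sum_mul_choose_eq_zero_of_add_sub_eq {f : ℕ → ℤ} {n : ℕ} (hn : n ≠ 0) {z : ℤ}
    (h : ∀ a ≤ n, f a + f (n - a) = (-1) ^ (a + 1) * z) :
    ∑ l ∈ range (n + 1), f l * n.choose l = 0 := by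
  have h2 : 2 * ∑ l ∈ range (n + 1), f l * n.choose l =
      -z * ∑ l ∈ range (n + 1), (-1 : ℤ) ^ l * n.choose l := by
    rw [two_mul]
    nth_rewrite 1 [← sum_range_reflect_mul_choose]
    rw [← sum_add_distrib, mul_sum]
    refine sum_congr rfl fun l hl ↦ ?_
    rw [← add_mul, add_comm, h l (Nat.lt_succ_iff.1 (mem_range.1 hl)), pow_succ]
    ring
  rw [Int.alternating_sum_range_choose_of_ne hn, mul_zero] at h2
  omega

section Fourier

variable {N : ℕ}

def reflSum (φ : ZMod N → ℂ) (r a : ZMod N) : ℂ := φ a + φ (r - a)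

theorem sum_range_reflSum_mul_choose (φ : ZMod N → ℂ) (n : ℕ) :
    ∑ l ∈ range (n + 1), reflSum φ n l * n.choose l =
      2 * ∑ l ∈ range (n + 1), φ l * n.choose l := by
  have h : ∀ l ∈ range (n + 1),
      reflSum φ n l * n.choose l = φ l * n.choose l + φ ↑(n - l) * n.choose l := by
    intro l hl
    rw [reflSum, Nat.cast_sub (Nat.lt_succ_iff.1 (mem_range.1 hl)), add_mul]
  rw [sum_congr rfl h, sum_add_distrib, sum_range_reflect_mul_choose (fun l ↦ φ l)]
  ring

variable [NeZero N]

theorem sum_range_mul_choose_eq_sum_dft (φ : ZMod N → ℂ) (n : ℕ) :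
    ∑ l ∈ range (n + 1), φ l * n.choose l =
      (N : ℂ)⁻¹ * ∑ u, 𝓕 φ u * (1 + stdAddChar u) ^ n := by
  have hφ (l : ℕ) : φ l = (N : ℂ)⁻¹ * ∑ u, 𝓕 φ u * stdAddChar u ^ l := by
    conv_lhs => rw [← dft.symm_apply_apply φ]
    simp only [invDFT_apply, smul_eq_mul, mul_comm (𝓕 φ _), ← nsmul_eq_mul',
      AddChar.map_nsmul_eq_pow]
  simp only [hφ, add_comm (1 : ℂ), add_pow, one_pow, mul_one, mul_sum, sum_mul]
  rw [sum_comm]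
  exact sum_congr rfl fun u _ ↦ sum_congr rfl fun l _ ↦ by ring

theorem dft_neg_of_sub_eq {ψ : ZMod N → ℂ} {r : ZMod N} (h : ∀ a, ψ (r - a) = ψ a)
    (u : ZMod N) : 𝓕 ψ (-u) = stdAddChar (u * r) * 𝓕 ψ u := by
  simp only [dft_apply, smul_eq_mul, mul_sum]
  refine Fintype.sum_equiv (Equiv.subLeft r) _ _ fun a ↦ ?_
  rw [Equiv.subLeft_apply, h, ← mul_assoc, ← AddChar.map_add_eq_mul]
  congr 2
  ring

theorem one_add_stdAddChar_neg_pow (u : ZMod N) (n : ℕ) :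
    (1 + stdAddChar (-u)) ^ n = stdAddChar (-(u * (n : ZMod N))) * (1 + stdAddChar u) ^ n := by
  rw [← nsmul_eq_mul', AddChar.map_neg_eq_inv, AddChar.map_neg_eq_inv, AddChar.map_nsmul_eq_pow,
    ← inv_pow, ← mul_pow, mul_add, mul_one, inv_mul_cancel₀ (norm_ne_zero_iff.1 (by simp)),
    add_comm]

theorem eq_or_eq_neg_of_norm_one_add_stdAddChar_eq {u v : ZMod N}
    (h : ‖1 + stdAddChar u‖ = ‖1 + stdAddChar v‖) : v = u ∨ v = -u := by
  have hre (w : ℂ) (hw : ‖w‖ = 1) : ‖1 + w‖ ^ 2 = 2 + 2 * w.re := by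
    rw [Complex.sq_norm, Complex.normSq_apply]
    have := Complex.normSq_eq_norm_sq w
    rw [hw, Complex.normSq_apply] at this
    simp only [Complex.add_re, Complex.one_re, Complex.add_im, Complex.one_im]
    nlinarith
  have hre_eq : (stdAddChar u).re = (stdAddChar v).re := by
    have := congrArg (· ^ 2) h
    simp only [hre _ (AddChar.norm_apply _ _)] at this
    linarith
  have him_sq : (stdAddChar u).im ^ 2 = (stdAddChar v).im ^ 2 := by
    have hu := Complex.normSq_eq_norm_sq (stdAddChar u)
    have hv := Complex.normSq_eq_norm_sq (stdAddChar v)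
    rw [AddChar.norm_apply, Complex.normSq_apply, hre_eq] at hu
    rw [AddChar.norm_apply, Complex.normSq_apply] at hv
    linear_combination hu - hv
  rcases sq_eq_sq_iff_eq_or_eq_neg.1 him_sq with him | him
  · left
    exact injective_stdAddChar (Complex.ext hre_eq him).symm
  · right
    refine injective_stdAddChar ?_
    rw [AddChar.map_neg_eq_conj]
    exact Complex.ext (by simp [hre_eq]) (by simp [him])

theorem eventually_sum_mul_one_add_stdAddChar_pow_ne_zero (g : ZMod N → ℂ)
    (hg : ∃ u, g u ≠ 0 ∧ 1 + stdAddChar u ≠ 0) :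
    ∀ᶠ n in atTop, (∀ u, g (-u) * (1 + stdAddChar (-u)) ^ n = g u * (1 + stdAddChar u) ^ n) →
      ∑ u, g u * (1 + stdAddChar u) ^ n ≠ 0 := by
  classical
  obtain ⟨u, hgu, hu⟩ := hg
  obtain ⟨u₀, hu₀, hmax⟩ := exists_max_image (univ.filter (g · ≠ 0))
    (fun v ↦ ‖1 + stdAddChar v‖) ⟨u, mem_filter.2 ⟨mem_univ _, hgu⟩⟩
  replace hu₀ : g u₀ ≠ 0 := (mem_filter.1 hu₀).2
  set ρ := ‖1 + stdAddChar u₀‖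
  have hρ : 0 < ρ := (norm_pos_iff.2 hu).trans_le (hmax u (mem_filter.2 ⟨mem_univ _, hgu⟩))
  set T : Finset (ZMod N) := {u₀, -u₀}
  have hlt : ∀ v ∈ univ \ T, g v ≠ 0 → ‖1 + stdAddChar v‖ < ρ := by
    intro v hv hgv
    refine (hmax v (mem_filter.2 ⟨mem_univ _, hgv⟩)).lt_of_ne fun heq ↦ ?_
    have : v ∈ T := by
      rcases eq_or_eq_neg_of_norm_one_add_stdAddChar_eq heq.symm with rfl | rfl <;> simp [T]
    exact (mem_sdiff.1 hv).2 this
  have hsmall := (isLittleO_sum_mul_pow _ g _ hlt).def (half_pos (norm_pos_iff.2 hu₀))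
  filter_upwards [hsmall] with n hn hsymm hsum
  have hT : ∑ v ∈ T, g v * (1 + stdAddChar v) ^ n = #T * (g u₀ * (1 + stdAddChar u₀) ^ n) := by
    rw [← nsmul_eq_mul, ← sum_const]
    refine sum_congr rfl fun v hv ↦ ?_
    rcases mem_insert.1 hv with rfl | hv
    · rfl
    · rw [mem_singleton.1 hv, hsymm]
  have hT_norm : ‖g u₀‖ * ρ ^ n ≤ ‖∑ v ∈ T, g v * (1 + stdAddChar v) ^ n‖ := by
    rw [hT, norm_mul, Complex.norm_natCast, norm_mul, norm_pow]
    exact le_mul_of_one_le_left (by positivity) (by exact_mod_cast card_pos.2 ⟨u₀, by simp [T]⟩)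
  rw [← sum_sdiff (subset_univ T), add_eq_zero_iff_neg_eq] at hsum
  rw [← hsum, norm_neg] at hT_norm
  rw [norm_pow, Real.norm_of_nonneg hρ.le] at hn
  have : 0 < ‖g u₀‖ * ρ ^ n := by positivity
  linarith

theorem eventually_dft_reflSum_eq_zero (φ : ZMod N → ℂ) :
    ∀ᶠ n in atTop, ∑ l ∈ range (n + 1), φ l * n.choose l = 0 →
      ∀ u, 1 + stdAddChar u ≠ 0 → 𝓕 (reflSum φ n) u = 0 := by
  -- `𝓕 (reflSum φ n)` only depends on `n mod N`, so fix the residue first.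
  have key (r : ZMod N) : ∀ᶠ n : ℕ in atTop, (n : ZMod N) = r →
      ∑ l ∈ range (n + 1), φ l * n.choose l = 0 →
      ∀ u, 1 + stdAddChar u ≠ 0 → 𝓕 (reflSum φ r) u = 0 := by
    by_cases h : ∃ u, 𝓕 (reflSum φ r) u ≠ 0 ∧ 1 + stdAddChar u ≠ 0
    · filter_upwards [eventually_sum_mul_one_add_stdAddChar_pow_ne_zero _ h] with n hn hnr hS
      subst hnr
      refine absurd ?_ (hn fun u ↦ ?_)
      · have := sum_range_mul_choose_eq_sum_dft (reflSum φ n) n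
        rw [sum_range_reflSum_mul_choose, hS, mul_zero, eq_comm, mul_eq_zero] at this
        exact this.resolve_left (inv_ne_zero (Nat.cast_ne_zero.2 (NeZero.ne N)))
      · rw [dft_neg_of_sub_eq (fun a ↦ by rw [reflSum, reflSum, sub_sub_cancel, add_comm]),
          one_add_stdAddChar_neg_pow, mul_mul_mul_comm, ← AddChar.map_add_eq_mul, add_neg_cancel,
          AddChar.map_zero_eq_one, one_mul]
    · push Not at h
      exact Eventually.of_forall fun n _ _ u hu ↦ by_contra fun h' ↦ hu (h u h')
  filter_upwards [eventually_all.2 key] with n hn using hn n rfl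

theorem stdAddChar_eq_neg_one_iff {Q : ℕ} [NeZero Q] {u : ZMod (2 * Q)} :
    stdAddChar u = -1 ↔ u = Q := by
  have hQ : stdAddChar (Q : ZMod (2 * Q)) = -1 := by
    refine (mul_self_eq_one_iff.1 ?_).resolve_left fun h ↦ ?_
    · have h2Q : (Q + Q : ZMod (2 * Q)) = 0 := by
        rw [← two_mul]
        exact_mod_cast ZMod.natCast_self (2 * Q)
      rw [← AddChar.map_add_eq_mul, h2Q, AddChar.map_zero_eq_one]
    · rw [← (stdAddChar (N := 2 * Q)).map_zero_eq_one, injective_stdAddChar.eq_iff,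
        ZMod.natCast_eq_zero_iff] at h
      exact NeZero.ne Q (Nat.eq_zero_of_dvd_of_lt h (by linarith [NeZero.pos Q]))
  rw [← hQ, injective_stdAddChar.eq_iff]

theorem eq_stdAddChar_mul_of_dft_eq_zero {ψ : ZMod N → ℂ} {v : ZMod N}
    (h : ∀ u ≠ v, 𝓕 ψ u = 0) (a : ZMod N) : ψ a = stdAddChar (v * a) * ψ 0 := by
  have hψ (b : ZMod N) : ψ b = (N : ℂ)⁻¹ * (stdAddChar (v * b) * 𝓕 ψ v) := by
    conv_lhs => rw [← dft.symm_apply_apply ψ]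
    rw [invDFT_apply, sum_eq_single v (fun u _ hu ↦ by rw [h u hu, smul_zero]) (by simp),
      smul_eq_mul, smul_eq_mul]
  rw [hψ a, hψ 0, mul_zero, AddChar.map_zero_eq_one]
  ring

end Fourier

theorem eventually_add_sub_eq_neg_one_pow_mul {δ : ℕ → ℤ} {Q : ℕ} [NeZero Q]
    (hδ : Function.Periodic δ (2 * Q)) :
    ∀ᶠ n in atTop, ∑ l ∈ range (n + 1), δ l * n.choose l = 0 →
      ∀ a ≤ n, δ a + δ (n - a) = (-1) ^ a * (δ 0 + δ n) := by
  set φ : ZMod (2 * Q) → ℂ := fun x ↦ δ x.val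
  have hφ (l : ℕ) : φ l = δ l := by
    have := hδ.nat_mul (l / (2 * Q)) (l % (2 * Q))
    rw [Nat.cast_id, Nat.mod_add_div'] at this
    simp only [φ, ZMod.val_natCast, this]
  have hQ : stdAddChar (Q : ZMod (2 * Q)) = -1 := stdAddChar_eq_neg_one_iff.2 rfl
  filter_upwards [eventually_dft_reflSum_eq_zero φ] with n hn hS a ha
  have hS' : ∑ l ∈ range (n + 1), φ l * n.choose l = 0 := by
    simp only [hφ]
    exact_mod_cast hS
  have h := eq_stdAddChar_mul_of_dft_eq_zero (v := (Q : ZMod (2 * Q)))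
    (fun u hu ↦ hn hS' u (by rwa [ne_eq, add_eq_zero_iff_eq_neg', stdAddChar_eq_neg_one_iff])) a
  rw [reflSum, reflSum, sub_zero, ← Nat.cast_sub ha, ← nsmul_eq_mul', AddChar.map_nsmul_eq_pow, hQ,
    hφ, hφ, hφ] at h
  simp only [φ, ZMod.val_zero] at h
  exact_mod_cast h

theorem eventually_balanced_iff_trivially_balanced_general
    (k j : ℕ)
    (F : (Fin j → ZMod 2) → ZMod 2)
    (δ : ℕ → ℤ)
    (hδ : ∀ l : ℕ, δ l =
      ∑ m ∈ Finset.range (j + 1), coefC F m * (-1 : ℤ) ^ Nat.choose (l + m) k) :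
    ∃ n₀ : ℕ, ∀ n : ℕ, n₀ < n →
      ((∑ l ∈ Finset.range (n + 1), δ l * (n.choose l : ℤ) = 0 ↔
        ∃ z : ℤ, ∀ a : ℕ, a ≤ n → δ a + δ (n - a) = (-1 : ℤ) ^ (a + 1) * z) ∧
      (∑ l ∈ Finset.range (n + 1), δ l * (n.choose l : ℤ) = 0 → Odd n →
        ∀ a : ℕ, a ≤ n → δ (n - a) = -δ a)) := by
  have hper : Function.Periodic δ (2 ^ k) := fun l ↦ by
    simp only [hδ, add_right_comm l (2 ^ k)]
    exact sum_congr rfl fun m _ ↦ congrArg _ (periodic_neg_one_pow_choose k (l + m))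
  obtain ⟨n₀, hn₀⟩ := eventually_atTop.1 (eventually_add_sub_eq_neg_one_pow_mul (hper.nat_mul 2))
  refine ⟨n₀, fun n hn ↦ ⟨⟨fun hS ↦ ⟨-(δ 0 + δ n), fun a ha ↦ ?_⟩, ?_⟩, fun hS hodd a ha ↦ ?_⟩⟩
  · rw [hn₀ n hn.le hS a ha, pow_succ]
    ring
  · rintro ⟨z, hz⟩
    exact sum_mul_choose_eq_zero_of_add_sub_eq (by omega) hz
  · have h0 := hn₀ n hn.le hS n le_rfl
    rw [Nat.sub_self, hodd.neg_one_pow] at h0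
    have ha := hn₀ n hn.le hS a ha
    rw [show δ 0 + δ n = 0 by linarith, mul_zero] at ha
    linarith

/-- Let `δ_l = Σ_{m=0}^j C_m(F)(-1)^{C(l+m,k)}`, so that
`S(σ_{n+j,k}+F) = Σ_{l=0}^n δ_l C(n,l)`. There is an `n₀` such that for every
`n > n₀`: `Σ_{l=0}^n δ_l C(n,l) = 0` iff there exists `z ∈ ℤ` with
`δ_a + δ_{n−a} = (-1)^{a−1} z` for all `0 ≤ a ≤ n`; moreover, in that case, if `n`
is odd then `δ_{n−a} = −δ_a` for all `0 ≤ a ≤ n`. For `n` large, the perturbation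
is balanced iff it is trivially balanced. -/
theorem eventually_balanced_iff_trivially_balanced
    (k j : ℕ) (hk : 1 ≤ k) (hj : 1 ≤ j)
    (F : (Fin j → ZMod 2) → ZMod 2)
    (δ : ℕ → ℤ)
    (hδ : ∀ l : ℕ, δ l =
      ∑ m ∈ Finset.range (j + 1), coefC F m * (-1 : ℤ) ^ Nat.choose (l + m) k) :
    ∃ n₀ : ℕ, ∀ n : ℕ, n₀ < n →
      ((∑ l ∈ Finset.range (n + 1), δ l * (n.choose l : ℤ) = 0 ↔
        ∃ z : ℤ, ∀ a : ℕ, a ≤ n → δ a + δ (n - a) = (-1 : ℤ) ^ (a + 1) * z) ∧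
      (∑ l ∈ Finset.range (n + 1), δ l * (n.choose l : ℤ) = 0 → Odd n →
        ∀ a : ℕ, a ≤ n → δ (n - a) = -δ a)) :=
  eventually_balanced_iff_trivially_balanced_general k j F δ hδ
end

section
/- Let j ≥ 1 and n ≥ 1 be integers, let Γ_j = {x ∈ ℤ : |x| ≤ 2^{j−1}} and V_j = {0, 1, …, 2^{j−1}}. Let γ_j(n) be the number of tuples (x₀, x₁, …, x_n) ∈ Γ_j^{n+1} satisfying Σ_{l=0}^{n} x_l·C(n,l) = 0. Then γ_j(n) = Σ_{x ∈ V_j^{n+1}} 2^{w(x)} · ∫₀¹ Π_{i=0}^{n} cos(π·x_i·C(n,i)·s) ds, where w(x) denotes the number of non-zero entries of the tuple x = (x₀,…,x_n). -/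
/-!
Since `∫₀¹ cos (π k s) ds = [k = 0]` for an integer `k`, the number of solutions is
`∫₀¹ Σ_y cos (π s Σ_i y_i C(n,i)) ds`, the sum running over `y ∈ Γ_j^{n+1}`. As `Γ_j` is
symmetric, `Σ_{z ∈ Γ_j} e^{izθ}` is real, so taking real parts in
`Σ_y e^{iπs Σ_i y_i C(n,i)} = Π_i Σ_{z ∈ Γ_j} e^{iπ z C(n,i) s}` factorises the inner sum as
`Π_i Σ_{z ∈ Γ_j} cos (π z C(n,i) s)`. Each factor folds onto `V_j` (the terms at `±z` agree),
and expanding the product again gives the weights `2^{w(x)}`.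
-/

open Finset Real

lemma integral_cos_pi_int_mul (k : ℤ) :
    ∫ s in (0:ℝ)..1, cos (π * k * s) = if k = 0 then 1 else 0 := by
  split_ifs with hk
  · simp [hk]
  · have hπk : π * k ≠ 0 := mul_ne_zero pi_ne_zero (Int.cast_ne_zero.mpr hk)
    rw [intervalIntegral.integral_comp_mul_left cos hπk]
    simp [mul_comm π, sin_int_mul_pi]

lemma card_filter_eq_zero_eq_integral_sum_cos {α : Type*} (G : Finset α) (k : α → ℤ) :
    (#(G.filter fun a => k a = 0) : ℝ) =
      ∫ s in (0:ℝ)..1, ∑ a ∈ G, cos (π * k a * s) := by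
  rw [natCast_card_filter, intervalIntegral.integral_finsetSum fun a _ =>
    (by fun_prop : Continuous _).intervalIntegrable _ _]
  simp_rw [integral_cos_pi_int_mul]

lemma sum_sin_int_mul_eq_zero {S : Finset ℤ} (hS : ∀ z ∈ S, -z ∈ S) (θ : ℝ) :
    ∑ z ∈ S, sin (z * θ) = 0 := by
  refine sum_involution (fun z _ => -z) (fun z _ => ?_) (fun z _ hsin hz => hsin ?_) hS
    (fun z _ => neg_neg z)
  · rw [Int.cast_neg, neg_mul, sin_neg, add_neg_cancel]
  · obtain rfl : z = 0 := by omega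
    simp

lemma sum_exp_int_mul_I_eq_sum_cos {S : Finset ℤ} (hS : ∀ z ∈ S, -z ∈ S) (θ : ℝ) :
    ∑ z ∈ S, Complex.exp ((z * θ : ℝ) * Complex.I) = ∑ z ∈ S, cos (z * θ) := by
  simp_rw [Complex.exp_mul_I, ← Complex.ofReal_cos, ← Complex.ofReal_sin, sum_add_distrib,
    ← sum_mul, ← Complex.ofReal_sum, sum_sin_int_mul_eq_zero hS, Complex.ofReal_zero, zero_mul,
    add_zero]

lemma sum_piFinset_cos_sum_eq_prod_sum_cos {ι : Type*} [Fintype ι] [DecidableEq ι]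
    {S : ι → Finset ℤ} (hS : ∀ i, ∀ z ∈ S i, -z ∈ S i) (θ : ι → ℝ) :
    ∑ y ∈ Fintype.piFinset S, cos (∑ i, y i * θ i) = ∏ i, ∑ z ∈ S i, cos (z * θ i) :=
  calc ∑ y ∈ Fintype.piFinset S, cos (∑ i, y i * θ i)
      = (∑ y ∈ Fintype.piFinset S, ∏ i, Complex.exp ((y i * θ i : ℝ) * Complex.I)).re := by
        simp only [Complex.re_sum, ← Complex.exp_sum, ← sum_mul, ← Complex.ofReal_sum,
          Complex.exp_ofReal_mul_I_re]
    _ = (∏ i, ∑ z ∈ S i, Complex.exp ((z * θ i : ℝ) * Complex.I)).re := by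
        rw [prod_univ_sum]
    _ = ∏ i, ∑ z ∈ S i, cos (z * θ i) := by
        simp_rw [sum_exp_int_mul_I_eq_sum_cos (hS _), ← Complex.ofReal_prod, Complex.ofReal_re]

lemma sum_Icc_neg_eq_sum_range_of_even {M : Type*} [AddCommMonoid M] (N : ℕ) {f : ℤ → M}
    (hf : ∀ z, f (-z) = f z) :
    ∑ z ∈ Icc (-N : ℤ) N, f z =
      ∑ x ∈ range (N + 1), (if x = 0 then 1 else 2) • f x := by
  induction N with
  | zero => simp
  | succ N ih =>
    have hIcc : Icc (-(N + 1 : ℕ) : ℤ) (N + 1 : ℕ) =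
        insert (-(N + 1 : ℤ)) (insert (N + 1 : ℤ) (Icc (-N : ℤ) N)) := by
      ext z
      simp only [mem_Icc, mem_insert]
      omega
    rw [hIcc, sum_insert (by simp; omega), sum_insert (by simp), ih, sum_range_succ _ (N + 1), hf,
      if_neg N.succ_ne_zero, two_nsmul, Nat.cast_succ]
    abel

lemma sum_piFinset_Icc_cos_sum_eq_sum_piFinset_range {ι : Type*} [Fintype ι] [DecidableEq ι]
    (N : ℕ) (θ : ι → ℝ) :
    ∑ y ∈ Fintype.piFinset fun _ : ι => Icc (-N : ℤ) N, cos (∑ i, y i * θ i) =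
      ∑ x ∈ Fintype.piFinset fun _ : ι => range (N + 1),
        (2 : ℝ) ^ #{i | x i ≠ 0} * ∏ i, cos (x i * θ i) := by
  rw [sum_piFinset_cos_sum_eq_prod_sum_cos (fun _ z hz => by simp only [mem_Icc] at hz ⊢; omega)]
  have hcos (i : ι) := sum_Icc_neg_eq_sum_range_of_even N (f := fun z : ℤ => cos (z * θ i))
    fun z => by rw [Int.cast_neg, neg_mul, cos_neg]
  simp_rw [hcos, prod_univ_sum, nsmul_eq_mul, prod_mul_distrib, ← prod_const, prod_filter,
    ite_not]
  push_cast
  rfl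

theorem count_solutions_integral_representation_general
    (j n : ℕ) :
    (((Fintype.piFinset
        (fun _ : Fin (n + 1) => Finset.Icc (-(2 ^ (j - 1) : ℤ)) (2 ^ (j - 1)))).filter
          (fun x : Fin (n + 1) → ℤ => ∑ i, x i * (n.choose i : ℤ) = 0)).card : ℝ) =
      ∑ x ∈ Fintype.piFinset (fun _ : Fin (n + 1) => Finset.range (2 ^ (j - 1) + 1)),
        (2 : ℝ) ^ ((Finset.univ.filter (fun i : Fin (n + 1) => x i ≠ 0)).card) *
          ∫ s in (0:ℝ)..1, ∏ i : Fin (n + 1),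
            Real.cos (Real.pi * (x i : ℝ) * (n.choose i : ℝ) * s) := by
  have hN : (2 ^ (j - 1) : ℤ) = (2 ^ (j - 1) : ℕ) := by norm_num
  simp_rw [card_filter_eq_zero_eq_integral_sum_cos, ← intervalIntegral.integral_const_mul, hN]
  rw [← intervalIntegral.integral_finsetSum fun x _ =>
    (by fun_prop : Continuous _).intervalIntegrable _ _]
  refine intervalIntegral.integral_congr fun s _ => ?_
  convert sum_piFinset_Icc_cos_sum_eq_sum_piFinset_range (2 ^ (j - 1))
    (fun i : Fin (n + 1) => π * n.choose i * s) using 3 with y _ x _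
  · push_cast
    rw [mul_sum, sum_mul]
    exact sum_congr rfl fun i _ => by ring
  · exact prod_congr rfl fun i _ => by ring_nf

/-- Integral representation of the number `γ_j(n)` of solutions
`(x₀,…,x_n) ∈ Γ_j^{n+1}`, `Γ_j = {x ∈ ℤ : |x| ≤ 2^{j−1}}`, of
`Σ_{l=0}^n x_l C(n,l) = 0`:
`γ_j(n) = Σ_{x ∈ V_j^{n+1}} 2^{w(x)} ∫₀¹ Π_{i=0}^n cos(π x_i C(n,i) s) ds`,
where `V_j = {0,1,…,2^{j−1}}` and `w(x)` is the number of non-zero entries of `x`. -/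
theorem count_solutions_integral_representation
    (j n : ℕ) (hj : 1 ≤ j) (hn : 1 ≤ n) :
    (((Fintype.piFinset
        (fun _ : Fin (n + 1) => Finset.Icc (-(2 ^ (j - 1) : ℤ)) (2 ^ (j - 1)))).filter
          (fun x : Fin (n + 1) → ℤ => ∑ i, x i * (n.choose i : ℤ) = 0)).card : ℝ) =
      ∑ x ∈ Fintype.piFinset (fun _ : Fin (n + 1) => Finset.range (2 ^ (j - 1) + 1)),
        (2 : ℝ) ^ ((Finset.univ.filter (fun i : Fin (n + 1) => x i ≠ 0)).card) *
          ∫ s in (0:ℝ)..1, ∏ i : Fin (n + 1),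
            Real.cos (Real.pi * (x i : ℝ) * (n.choose i : ℝ) * s) :=
  count_solutions_integral_representation_general j n
end
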